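/- arXiv:2411.14361 — 5 statements merged into one kernel-verified Lean document; each statement's English description precedes it below -/
import Mathlib

section
/- Let E : 𝔽₂^k → 𝔽₂^n be a linear map and let H_1,…,H_k be q-uniform hypergraph matchings on [n] such that Σ_{u∈C} E(b)_u = b_i for every b ∈ 𝔽₂^k, every i ∈ [k], and every C ∈ H_i. Color every hyperedge of H_i with color i, and let H be the disjoint union of H_1,…,H_k. Then for every even cover S in H and every color i ∈ [k], the number of hyperedges of S carrying color i is even. -/
open Finset

/-- Let `E : 𝔽₂^k → 𝔽₂^n` be linear and `H 1, …, H k` be `q`-uniform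
matchings on `[n]` with `∑_{u ∈ C} E(b) u = b i` for all `b`, `i`, `C ∈ H i`.
Color each hyperedge of `H i` with color `i` (edges of the disjoint union are
indexed by pairs `(i, C)` with `C ∈ H i`). Then every even cover `S` (a nonempty
set of hyperedges covering each vertex an even number of times) uses every color
an even number of times. -/
theorem stmt2 (q n k : ℕ)
    (E : (Fin k → ZMod 2) →ₗ[ZMod 2] (Fin n → ZMod 2))
    (H : Fin k → Finset (Finset (Fin n)))
    (huniform : ∀ i, ∀ C ∈ H i, C.card = q)
    (hmatch : ∀ i, ∀ C ∈ H i, ∀ C' ∈ H i, C ≠ C' → Disjoint C C')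
    (hdecode : ∀ (b : Fin k → ZMod 2) (i : Fin k), ∀ C ∈ H i, ∑ u ∈ C, E b u = b i)
    (S : Finset (Fin k × Finset (Fin n)))
    (hSmem : ∀ e ∈ S, e.2 ∈ H e.1)
    (hSne : S.Nonempty)
    (hcover : ∀ v : Fin n, Even ((S.filter (fun e => v ∈ e.2)).card)) :
    ∀ i : Fin k, Even ((S.filter (fun e => e.1 = i)).card) := by
  intro i
  set b : Fin k → ZMod 2 := Pi.single i 1 with hb
  have key : ∑ e ∈ S, ∑ u ∈ e.2, E b u = ∑ e ∈ S, b e.1 := by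
    refine Finset.sum_congr rfl fun e he => ?_
    exact hdecode b e.1 e.2 (hSmem e he)
  -- LHS is zero by double counting
  have lhs0 : ∑ e ∈ S, ∑ u ∈ e.2, E b u = 0 := by
    have h1 : ∀ e ∈ S, ∑ u ∈ e.2, E b u = ∑ u : Fin n, if u ∈ e.2 then E b u else 0 :=
      fun e _ => by rw [Finset.sum_ite_mem, Finset.univ_inter]
    rw [Finset.sum_congr rfl h1, Finset.sum_comm]
    refine Finset.sum_eq_zero fun u _ => ?_
    rw [← Finset.sum_filter, Finset.sum_const, nsmul_eq_mul]
    obtain ⟨m, hm⟩ := hcover u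
    rw [hm]
    push_cast
    ring_nf
    rw [show ((2:ZMod 2)) = 0 from rfl]
    ring
  -- RHS counts color-i edges
  have rhs : ∑ e ∈ S, b e.1 = ((S.filter (fun e => e.1 = i)).card : ZMod 2) := by
    rw [Finset.card_filter]
    push_cast
    refine Finset.sum_congr rfl fun e _ => ?_
    by_cases h : e.1 = i <;> simp [hb, h, Pi.single_apply]
  have : ((S.filter (fun e => e.1 = i)).card : ZMod 2) = 0 := by
    rw [← rhs, ← key, lhs0]
  have h2 : (2:ℕ) ∣ (S.filter (fun e => e.1 = i)).card :=
    (ZMod.natCast_eq_zero_iff _ 2).mp this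
  exact even_iff_two_dvd.mpr h2
end

section
/- Let q ≥ 3 be an odd integer and let γ_1 ≥ γ_2 ≥ ⋯ ≥ γ_{q−1} ≥ γ_q ≥ 0 be real numbers. Then there exists t ∈ {1,…,q} satisfying: (1) γ_r ≤ γ_t + 1 − 2r/q for all 1 ≤ r ≤ ⌈(q−t)/2⌉; (2) γ_r ≤ γ_t − 2(r−t)/q + (1/q)·(t − [t even]) for all t < r ≤ ⌊(q+t)/2⌋, where [t even] = 1 if t is even and 0 otherwise; (3) if t < q/2 then γ_t − (1 − 2t/q) ≥ γ_1 − (1 − 2/q), and if t > q/2 then γ_t > γ_1 − (1 − 2/q). -/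
/-- Existence of a good index.
Let `q ≥ 3` be odd and `γ 1 ≥ γ 2 ≥ ⋯ ≥ γ q ≥ 0` reals. Then there is `t ∈ {1,…,q}` with:
(1) `γ r ≤ γ t + 1 − 2r/q` for all `1 ≤ r ≤ ⌈(q−t)/2⌉`;
(2) `γ r ≤ γ t − 2(r−t)/q + (1/q)(t − [t even])` for all `t < r ≤ ⌊(q+t)/2⌋`;
(3) if `t < q/2` then `γ t − (1 − 2t/q) ≥ γ 1 − (1 − 2/q)`, and if `t > q/2`
    then `γ t > γ 1 − (1 − 2/q)`. -/
theorem stmt6 (q : ℕ) (hq3 : 3 ≤ q) (hqodd : Odd q) (γ : ℕ → ℝ)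
    (hmono : ∀ i : ℕ, 1 ≤ i → i < q → γ (i + 1) ≤ γ i)
    (hnonneg : 0 ≤ γ q) :
    ∃ t : ℕ, 1 ≤ t ∧ t ≤ q ∧
      (∀ r : ℕ, 1 ≤ r → r ≤ (q - t + 1) / 2 →
        γ r ≤ γ t + 1 - 2 * (r : ℝ) / (q : ℝ)) ∧
      (∀ r : ℕ, t < r → r ≤ (q + t) / 2 →
        γ r ≤ γ t - 2 * ((r : ℝ) - (t : ℝ)) / (q : ℝ)
          + (1 / (q : ℝ)) * ((t : ℝ) - if Even t then 1 else 0)) ∧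
      (2 * t < q → γ 1 - (1 - 2 / (q : ℝ)) ≤ γ t - (1 - 2 * (t : ℝ) / (q : ℝ))) ∧
      (q < 2 * t → γ 1 - (1 - 2 / (q : ℝ)) < γ t) := by
  obtain ⟨k, hk⟩ := hqodd
  have hq0 : (0:ℝ) < (q:ℝ) := by exact_mod_cast (by omega : 0 < q)
  -- monotonicity on the range [1, q]
  have hm : ∀ a b : ℕ, 1 ≤ a → a ≤ b → b ≤ q → γ b ≤ γ a := by
    intro a b ha hab hbq
    induction b with
    | zero => exact absurd hab (by omega)
    | succ n ih =>
      rcases Nat.lt_or_ge a (n+1) with h | h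
      · exact le_trans (hmono n (by omega) (by omega)) (ih (by omega) (by omega))
      · have : a = n + 1 := by omega
        rw [this]
  -- argmax of φ(r) = γ r + 2r/q over [1, (q-1)/2]
  have hne : (Finset.Icc 1 ((q-1)/2)).Nonempty := ⟨1, by simp [Finset.mem_Icc]; omega⟩
  obtain ⟨u, huMem, hmax⟩ :=
    Finset.exists_max_image (Finset.Icc 1 ((q-1)/2)) (fun r => γ r + 2*(r:ℝ)/(q:ℝ)) hne
  rw [Finset.mem_Icc] at huMem
  obtain ⟨hu1, huM⟩ := huMem
  have hmax' : ∀ r : ℕ, 1 ≤ r → r ≤ (q-1)/2 → γ r + 2*(r:ℝ)/(q:ℝ) ≤ γ u + 2*(u:ℝ)/(q:ℝ) := by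
    intro r h1 h2
    exact hmax r (Finset.mem_Icc.mpr ⟨h1, h2⟩)
  have h1max : γ 1 + 2/(q:ℝ) ≤ γ u + 2*(u:ℝ)/(q:ℝ) := by
    have h0 := hmax' 1 le_rfl (by omega)
    norm_num at h0
    linarith [h0]
  have h2u : 2*(u:ℝ)/(q:ℝ) ≤ 1 := by
    rw [div_le_one hq0]
    exact_mod_cast (by omega : 2*u ≤ q)
  by_cases h2 : ∀ r : ℕ, u < r → r ≤ (q + u) / 2 →
      γ r ≤ γ u - 2 * ((r : ℝ) - (u : ℝ)) / (q : ℝ)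
        + (1 / (q : ℝ)) * ((u : ℝ) - if Even u then 1 else 0)
  · -- the argmax u itself works
    refine ⟨u, hu1, by omega, ?_, h2, ?_, ?_⟩
    · intro r hr1 hr2
      have h := hmax' r hr1 (by omega)
      linarith
    · intro _
      linarith
    · intro hcon
      exact absurd hcon (by omega)
  · -- take a witness of the failure of (2) at u
    push_neg at h2
    obtain ⟨w, hwu, hwle, hw3⟩ := h2
    -- replace the `if` term by a constant `e`
    obtain ⟨e, he0, hce1, hce2⟩ : ∃ e : ℝ, (if Even u then (1:ℝ) else 0) = e ∧
        1 ≤ (u:ℝ) - e ∧ 2*(w:ℝ) ≤ (q:ℝ) + ((u:ℝ) - e) := by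
      rcases Nat.even_or_odd u with hu | hu
      · refine ⟨1, if_pos hu, ?_, ?_⟩
        · obtain ⟨j, hj⟩ := hu
          have : (2:ℝ) ≤ (u:ℝ) := by exact_mod_cast (by omega : 2 ≤ u)
          linarith
        · obtain ⟨j, hj⟩ := hu
          have h' : 2*w + 1 ≤ q + u := by omega
          have h'' : 2*(w:ℝ) + 1 ≤ (q:ℝ) + (u:ℝ) := by exact_mod_cast h'
          linarith
      · have hne' : ¬ Even u := by
          rw [Nat.even_iff]
          rw [Nat.odd_iff] at hu
          omega
        refine ⟨0, if_neg hne', ?_, ?_⟩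
        · have : (1:ℝ) ≤ (u:ℝ) := by exact_mod_cast hu1
          linarith
        · have h' : 2*w ≤ q + u := by omega
          have h'' : 2*(w:ℝ) ≤ (q:ℝ) + (u:ℝ) := by exact_mod_cast h'
          linarith
    rw [he0] at hw3
    -- bridge inequality
    have hlink : 2*(u:ℝ)/(q:ℝ) + 2 * ((w:ℝ) - (u:ℝ)) / (q:ℝ)
        - 1/(q:ℝ) * ((u:ℝ) - e) ≤ 1 := by
      have heq : 2*(u:ℝ)/(q:ℝ) + 2 * ((w:ℝ) - (u:ℝ)) / (q:ℝ) - 1/(q:ℝ) * ((u:ℝ) - e)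
          = (2*(w:ℝ) - ((u:ℝ) - e))/(q:ℝ) := by ring
      rw [heq, div_le_one hq0]
      linarith
    -- w is beyond the argmax range
    have hwM : (q-1)/2 < w := by
      by_contra hcon
      push_neg at hcon
      have h := hmax' w (by omega) hcon
      have hB : 2 * ((w:ℝ) - (u:ℝ)) / (q:ℝ) = 2*(w:ℝ)/(q:ℝ) - 2*(u:ℝ)/(q:ℝ) := by ring
      have hC : 1/(q:ℝ) * ((u:ℝ) - e) = ((u:ℝ) - e)/(q:ℝ) := by ring
      have hCpos : 0 < ((u:ℝ) - e)/(q:ℝ) := div_pos (by linarith) hq0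
      linarith
    have hwq : w ≤ q := by omega
    refine ⟨w, by omega, hwq, ?_, ?_, ?_, ?_⟩
    · -- condition (1) for w
      intro r hr1 hr2
      have h := hmax' r hr1 (by omega)
      linarith
    · -- condition (2) for w
      intro r hr1 hr2
      have hrq : r ≤ q := by omega
      have hmrw : γ r ≤ γ w := hm w r (by omega) (le_of_lt hr1) hrq
      obtain ⟨f, hf0, hfb⟩ : ∃ f : ℝ, (if Even w then (1:ℝ) else 0) = f ∧
          2*(r:ℝ) - 2*(w:ℝ) ≤ (w:ℝ) - f := by
        rcases Nat.even_or_odd w with hw | hw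
        · refine ⟨1, if_pos hw, ?_⟩
          obtain ⟨j, hj⟩ := hw
          have h' : 2*r + 1 ≤ 3*w := by omega
          have h'' : 2*(r:ℝ) + 1 ≤ 3*(w:ℝ) := by exact_mod_cast h'
          linarith
        · have hne' : ¬ Even w := by
            rw [Nat.even_iff]
            rw [Nat.odd_iff] at hw
            omega
          refine ⟨0, if_neg hne', ?_⟩
          obtain ⟨j, hj⟩ := hw
          have h' : 2*r ≤ 3*w := by omega
          have h'' : 2*(r:ℝ) ≤ 3*(w:ℝ) := by exact_mod_cast h'
          linarith
      rw [hf0]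
      have hb : 1 / (q:ℝ) * ((w:ℝ) - f) - 2 * ((r:ℝ) - (w:ℝ)) / (q:ℝ)
          = (((w:ℝ) - f) - (2*(r:ℝ) - 2*(w:ℝ)))/(q:ℝ) := by ring
      have hnn : 0 ≤ (((w:ℝ) - f) - (2*(r:ℝ) - 2*(w:ℝ)))/(q:ℝ) :=
        div_nonneg (by linarith) hq0.le
      linarith
    · -- condition (3a) for w : vacuous
      intro hcon
      exact absurd hcon (by omega)
    · -- condition (3b) for w
      intro _
      linarith
end

section
/- Let H_1,…,H_k be q-uniform matchings on [n] whose disjoint union H is t-approximately strongly regular, with partition {H_θ}_{θ∈[p]} and t-element sets Q_θ as in that definition, and write d_t := d_{H,t}. Then for every b ∈ {±1}^k: val(Ψ_b)² ≤ 2|H|²/d_t + (8|H|/d_t) · E_{(L,R)}[val(f_{L,R,t})], where the expectation is over a uniformly random partition L ⊔ R = [k] (each index i ∈ [k] is placed in L or in R independently with probability 1/2). -/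
open Finset

/-- An index `t ∈ {1,…,q}` is good with respect to the co-degree sequence
`d 1 ≥ ⋯ ≥ d q` (on `n` vertices) if:
(1) `d r / d t ≤ n^{1−2r/q}` for `1 ≤ r ≤ ⌈(q−t)/2⌉`;
(2) `d r / d t ≤ n^{−(2/q)(r−t)+(1/q)(t−[t even])}` for `t ≤ r ≤ ⌊(q+t)/2⌋`;
(3) `d t ≥ d 1 · n^{−(2/q)(t−1)}` if `t < q/2`, and `d t ≥ d 1 · n^{−1+2/q}`
if `t > q/2`. -/
def GoodIndex (n q : ℕ) (d : ℕ → ℝ) (t : ℕ) : Prop :=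
  (∀ r : ℕ, 1 ≤ r → r ≤ (q - t + 1) / 2 →
      d r / d t ≤ (n : ℝ) ^ ((1 : ℝ) - 2 * (r : ℝ) / (q : ℝ))) ∧
  (∀ r : ℕ, t ≤ r → r ≤ (q + t) / 2 →
      d r / d t ≤ (n : ℝ) ^ (-(2 / (q : ℝ)) * ((r : ℝ) - (t : ℝ)) +
        (1 / (q : ℝ)) * ((t : ℝ) - if Even t then 1 else 0))) ∧
  (2 * t < q → d 1 * (n : ℝ) ^ (-(2 / (q : ℝ)) * ((t : ℝ) - 1)) ≤ d t) ∧
  (q < 2 * t → d 1 * (n : ℝ) ^ (-1 + 2 / (q : ℝ)) ≤ d t)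

/-- Co-degree of a set `Q` in a hypergraph given as a multiset of hyperedges:
the number of hyperedges (with multiplicity) containing `Q`. -/
def mCodeg {n : ℕ} (H : Multiset (Finset (Fin n))) (Q : Finset (Fin n)) : ℕ :=
  (H.filter (fun C => Q ⊆ C)).card

/-- `d_{H,r}`: maximum co-degree over all `r`-element subsets of `[n]`. -/
def mMaxCodeg {n : ℕ} (H : Multiset (Finset (Fin n))) (r : ℕ) : ℕ :=
  (Finset.univ.filter (fun Q : Finset (Fin n) => Q.card = r)).sup (mCodeg H)

/-- `t`-approximate strong regularity: `H` can be partitioned into pieces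
`Hs θ`, each consisting of hyperedges containing a fixed `t`-element set `Qs θ`,
each of size between `d_{H,t}/2` and `d_{H,t}`, and `t` is a good index for the
co-degree sequence of `H`. -/
def mASR {n : ℕ} (q t : ℕ) (H : Multiset (Finset (Fin n))) : Prop :=
  ∃ (p : ℕ) (Hs : Fin p → Multiset (Finset (Fin n))) (Qs : Fin p → Finset (Fin n)),
    H = ∑ θ : Fin p, Hs θ ∧
    (∀ θ, (Qs θ).card = t ∧ ∀ C ∈ Hs θ, Qs θ ⊆ C) ∧
    (∀ θ, (mMaxCodeg H t : ℝ) / 2 ≤ ((Hs θ).card : ℝ) ∧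
      ((Hs θ).card : ℝ) ≤ (mMaxCodeg H t : ℝ)) ∧
    GoodIndex n q (fun r => (mMaxCodeg H r : ℝ)) t

/-- Co-degree of a set `Q` in the (disjoint) union of the matchings `H i`:
the number of pairs `(i, C)` with `C ∈ H i` and `Q ⊆ C`. -/
def unionCodeg {n k : ℕ} (H : Fin k → Finset (Finset (Fin n)))
    (Q : Finset (Fin n)) : ℕ :=
  ∑ j : Fin k, ((H j).filter (fun C => Q ⊆ C)).card

/-- `d_{H,r}`: maximum co-degree over all `r`-element subsets of `[n]`. -/
def unionMaxCodeg {n k : ℕ} (H : Fin k → Finset (Finset (Fin n))) (r : ℕ) : ℕ :=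
  (Finset.univ.filter (fun Q : Finset (Fin n) => Q.card = r)).sup (unionCodeg H)

/-- The number of hyperedges in the disjoint union of the matchings. -/
def unionSize {n k : ℕ} (H : Fin k → Finset (Finset (Fin n))) : ℕ :=
  ∑ i : Fin k, (H i).card

/-- The q-XOR polynomial `Ψ_b(x) = Σ_i b i Σ_{C ∈ H i} ∏_{u ∈ C} x u`. -/
def psiPoly {n k : ℕ} (H : Fin k → Finset (Finset (Fin n)))
    (b : Fin k → ℤˣ) (x : Fin n → ℤˣ) : ℝ :=
  ∑ i : Fin k, ((b i : ℤ) : ℝ) * ∑ C ∈ H i, ∏ u ∈ C, ((x u : ℤ) : ℝ)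

/-- The Cauchy–Schwarzed polynomial
`f_{L,R,t}(x) = Σ_θ Σ_{i∈L,j∈R} b i · b j · Σ_{C ∈ H_θ ∩ H i, C' ∈ H_θ ∩ H j}
x_{C∖Q_θ}·x_{C'∖Q_θ}`, for the partition `L ⊔ R = [k]` encoded by `σ : Fin k → Bool`
(`i ∈ L` iff `σ i = true`), where the pieces `H_θ` are encoded by the partition
function `part` on pairs `(i, C)`. -/
def fPoly {n k p : ℕ} (H : Fin k → Finset (Finset (Fin n)))
    (part : Fin k × Finset (Fin n) → Fin p) (Qs : Fin p → Finset (Fin n))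
    (b : Fin k → ℤˣ) (σ : Fin k → Bool) (x : Fin n → ℤˣ) : ℝ :=
  ∑ i ∈ Finset.univ.filter (fun i : Fin k => σ i = true),
    ∑ j ∈ Finset.univ.filter (fun j : Fin k => σ j = false),
      ((b i : ℤ) : ℝ) * ((b j : ℤ) : ℝ) *
        ∑ C ∈ H i, ∑ C' ∈ H j,
          (if part (i, C) = part (j, C') then
            (∏ u ∈ C \ Qs (part (i, C)), ((x u : ℤ) : ℝ)) *
              ∏ u ∈ C' \ Qs (part (i, C)), ((x u : ℤ) : ℝ)
          else 0)


section Aux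
variable {n k p : ℕ} (H : Fin k → Finset (Finset (Fin n)))
  (part : Fin k × Finset (Fin n) → Fin p) (Qs : Fin p → Finset (Fin n))
  (b : Fin k → ℤˣ) (x : Fin n → ℤˣ)

/-- The summand `b_i · x_{C \ Q_{part(i,C)}}` attached to an edge pair. -/
def aF (e : Fin k × Finset (Fin n)) : ℝ :=
  ((b e.1 : ℤ) : ℝ) * ∏ u ∈ e.2 \ Qs (part e), ((x u : ℤ) : ℝ)

/-- `S_θ(x)`. -/
def SF (θ : Fin p) : ℝ :=
  ∑ e : Fin k × Finset (Fin n),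
    if e.2 ∈ H e.1 ∧ part e = θ then aF part Qs b x e else 0

/-- The off-diagonal cross term. -/
def TF : ℝ :=
  ∑ e : Fin k × Finset (Fin n), ∑ e' : Fin k × Finset (Fin n),
    if e.2 ∈ H e.1 ∧ e'.2 ∈ H e'.1 ∧ e.1 ≠ e'.1 ∧ part e = part e' then
      aF part Qs b x e * aF part Qs b x e' else 0

lemma prodX_sq (C : Finset (Fin n)) : (∏ u ∈ C, ((x u : ℤ) : ℝ)) ^ 2 = 1 := by
  rw [← Finset.prod_pow]
  refine Finset.prod_eq_one fun u _ => ?_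
  have : (x u) ^ 2 = 1 := Int.units_sq (x u)
  calc ((x u : ℤ) : ℝ) ^ 2 = (((x u ^ 2 : ℤˣ) : ℤ) : ℝ) := by push_cast; ring
    _ = 1 := by rw [this]; simp

lemma aF_sq (e : Fin k × Finset (Fin n)) : aF part Qs b x e ^ 2 = 1 := by
  rw [aF, mul_pow, prodX_sq]
  have : (b e.1) ^ 2 = 1 := Int.units_sq _
  calc ((b e.1 : ℤ) : ℝ) ^ 2 * 1 = (((b e.1 ^ 2 : ℤˣ) : ℤ) : ℝ) := by push_cast; ring
    _ = 1 := by rw [this]; simp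

lemma ind_sum : ∑ e : Fin k × Finset (Fin n), (if e.2 ∈ H e.1 then (1 : ℝ) else 0)
    = (unionSize H : ℝ) := by
  rw [Fintype.sum_prod_type, unionSize]
  push_cast
  refine Finset.sum_congr rfl fun i _ => ?_
  rw [Finset.sum_boole]
  norm_num [Finset.filter_univ_mem]

lemma psi_eq (hQsub : ∀ i, ∀ C ∈ H i, Qs (part (i, C)) ⊆ C) :
    psiPoly H b x = ∑ θ : Fin p,
      (∏ u ∈ Qs θ, ((x u : ℤ) : ℝ)) * SF H part Qs b x θ := by
  have rhs : ∀ θ : Fin p, (∏ u ∈ Qs θ, ((x u : ℤ) : ℝ)) * SF H part Qs b x θ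
      = ∑ e : Fin k × Finset (Fin n), if e.2 ∈ H e.1 ∧ part e = θ then
          (∏ u ∈ Qs θ, ((x u : ℤ) : ℝ)) * aF part Qs b x e else 0 := by
    intro θ
    rw [SF, Finset.mul_sum]
    exact Finset.sum_congr rfl fun e _ => by rw [mul_ite, mul_zero]
  have inner : ∀ e : Fin k × Finset (Fin n),
      (∑ θ : Fin p, if e.2 ∈ H e.1 ∧ part e = θ then
        (∏ u ∈ Qs θ, ((x u : ℤ) : ℝ)) * aF part Qs b x e else 0)
      = if e.2 ∈ H e.1 then ((b e.1 : ℤ) : ℝ) * ∏ u ∈ e.2, ((x u : ℤ) : ℝ) else 0 := by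
    intro e
    by_cases hm : e.2 ∈ H e.1
    · simp only [hm, true_and, if_true]
      rw [Finset.sum_ite_eq]
      simp only [Finset.mem_univ, if_true]
      rw [aF]
      have hsub : Qs (part e) ⊆ e.2 := hQsub e.1 e.2 hm
      rw [← Finset.prod_sdiff hsub]
      ring
    · simp [hm]
  calc psiPoly H b x
      = ∑ e : Fin k × Finset (Fin n), (if e.2 ∈ H e.1 then
          ((b e.1 : ℤ) : ℝ) * ∏ u ∈ e.2, ((x u : ℤ) : ℝ) else 0) := by
        rw [psiPoly, Fintype.sum_prod_type]
        refine Finset.sum_congr rfl fun i _ => ?_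
        dsimp only
        rw [Finset.sum_ite_mem, Finset.univ_inter, Finset.mul_sum]
    _ = ∑ e : Fin k × Finset (Fin n), ∑ θ : Fin p,
          (if e.2 ∈ H e.1 ∧ part e = θ then
            (∏ u ∈ Qs θ, ((x u : ℤ) : ℝ)) * aF part Qs b x e else 0) := by
        exact Finset.sum_congr rfl fun e _ => (inner e).symm
    _ = ∑ θ : Fin p, ∑ e : Fin k × Finset (Fin n),
          (if e.2 ∈ H e.1 ∧ part e = θ then
            (∏ u ∈ Qs θ, ((x u : ℤ) : ℝ)) * aF part Qs b x e else 0) := Finset.sum_comm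
    _ = ∑ θ : Fin p, (∏ u ∈ Qs θ, ((x u : ℤ) : ℝ)) * SF H part Qs b x θ := by
        exact Finset.sum_congr rfl fun θ _ => (rhs θ).symm

lemma S_sq (t : ℕ) (ht1 : 1 ≤ t) (hQcard : ∀ θ, (Qs θ).card = t)
    (hQsub : ∀ i, ∀ C ∈ H i, Qs (part (i, C)) ⊆ C)
    (hmatch : ∀ i, ∀ C ∈ H i, ∀ C' ∈ H i, C ≠ C' → Disjoint C C') :
    ∑ θ : Fin p, (SF H part Qs b x θ) ^ 2
      = (unionSize H : ℝ) + TF H part Qs b x := by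
  have step1 : ∀ θ : Fin p, (SF H part Qs b x θ) ^ 2
      = ∑ e : Fin k × Finset (Fin n), ∑ e' : Fin k × Finset (Fin n),
          if (e.2 ∈ H e.1 ∧ part e = θ) ∧ (e'.2 ∈ H e'.1 ∧ part e' = θ) then
            aF part Qs b x e * aF part Qs b x e' else 0 := by
    intro θ
    rw [sq, SF, Finset.sum_mul_sum]
    refine Finset.sum_congr rfl fun e _ => Finset.sum_congr rfl fun e' _ => ?_
    rw [ite_mul, zero_mul, mul_ite, mul_zero, ← ite_and]
  have step2 : ∀ e e' : Fin k × Finset (Fin n),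
      (∑ θ : Fin p, if (e.2 ∈ H e.1 ∧ part e = θ) ∧ (e'.2 ∈ H e'.1 ∧ part e' = θ) then
          aF part Qs b x e * aF part Qs b x e' else 0)
      = if e.2 ∈ H e.1 ∧ e'.2 ∈ H e'.1 ∧ part e = part e' then
          aF part Qs b x e * aF part Qs b x e' else 0 := by
    intro e e'
    by_cases hme : e.2 ∈ H e.1
    · by_cases hme' : e'.2 ∈ H e'.1
      · simp only [hme, hme', true_and]
        have hre : ∀ θ : Fin p, ((part e = θ) ∧ (part e' = θ)) ↔
            (part e = θ ∧ part e = part e') := by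
          intro θ; constructor
          · rintro ⟨h1, h2⟩; exact ⟨h1, h1.trans h2.symm⟩
          · rintro ⟨h1, h2⟩; exact ⟨h1, h2.symm.trans h1⟩
        simp only [hre, ite_and]
        rw [Finset.sum_ite_eq]
        simp
      · simp [hme']
    · simp [hme]
  have key : ∀ e e' : Fin k × Finset (Fin n),
      (if e.2 ∈ H e.1 ∧ e'.2 ∈ H e'.1 ∧ part e = part e' then
          aF part Qs b x e * aF part Qs b x e' else 0)
      = (if e = e' ∧ e.2 ∈ H e.1 then (1 : ℝ) else 0)
        + (if e.2 ∈ H e.1 ∧ e'.2 ∈ H e'.1 ∧ e.1 ≠ e'.1 ∧ part e = part e' then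
            aF part Qs b x e * aF part Qs b x e' else 0) := by
    intro e e'
    by_cases h1 : e = e'
    · subst h1
      by_cases hme : e.2 ∈ H e.1
      · have haa := aF_sq part Qs b x e
        rw [sq] at haa
        simp [hme, haa]
      · simp [hme]
    · by_cases h2 : e.1 = e'.1
      · have hfalse : ¬(e.2 ∈ H e.1 ∧ e'.2 ∈ H e'.1 ∧ part e = part e') := by
          rintro ⟨hme, hme', hpp⟩
          have hC : e.2 ≠ e'.2 := fun hc => h1 (Prod.ext h2 hc)
          have hme'' : e'.2 ∈ H e.1 := by rw [h2]; exact hme'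
          have hdis := hmatch e.1 e.2 hme e'.2 hme'' hC
          have hQ1 : Qs (part e) ⊆ e.2 := hQsub e.1 e.2 hme
          have hQ2 : Qs (part e) ⊆ e'.2 := by
            rw [hpp]; exact hQsub e'.1 e'.2 hme'
          have hne : (Qs (part e)).Nonempty :=
            Finset.card_pos.1 (by rw [hQcard]; omega)
          obtain ⟨u, hu⟩ := hne
          exact (Finset.disjoint_left.1 hdis (hQ1 hu)) (hQ2 hu)
        have hfalse2 : ¬(e.2 ∈ H e.1 ∧ e'.2 ∈ H e'.1 ∧ e.1 ≠ e'.1 ∧ part e = part e') := by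
          rintro ⟨-, -, hne, -⟩; exact hne h2
        simp [hfalse, hfalse2, h1]
      · simp [h1, h2]
  have diag : ∀ e : Fin k × Finset (Fin n),
      (∑ e' : Fin k × Finset (Fin n), if e = e' ∧ e.2 ∈ H e.1 then (1 : ℝ) else 0)
      = if e.2 ∈ H e.1 then (1 : ℝ) else 0 := by
    intro e
    simp only [ite_and]
    rw [Finset.sum_ite_eq]
    simp
  calc ∑ θ : Fin p, (SF H part Qs b x θ) ^ 2
      = ∑ θ : Fin p, ∑ e : Fin k × Finset (Fin n), ∑ e' : Fin k × Finset (Fin n),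
          (if (e.2 ∈ H e.1 ∧ part e = θ) ∧ (e'.2 ∈ H e'.1 ∧ part e' = θ) then
            aF part Qs b x e * aF part Qs b x e' else 0) :=
        Finset.sum_congr rfl fun θ _ => step1 θ
    _ = ∑ e : Fin k × Finset (Fin n), ∑ e' : Fin k × Finset (Fin n), ∑ θ : Fin p,
          (if (e.2 ∈ H e.1 ∧ part e = θ) ∧ (e'.2 ∈ H e'.1 ∧ part e' = θ) then
            aF part Qs b x e * aF part Qs b x e' else 0) := by
        rw [Finset.sum_comm]
        exact Finset.sum_congr rfl fun e _ => Finset.sum_comm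
    _ = ∑ e : Fin k × Finset (Fin n), ∑ e' : Fin k × Finset (Fin n),
          ((if e = e' ∧ e.2 ∈ H e.1 then (1 : ℝ) else 0)
            + (if e.2 ∈ H e.1 ∧ e'.2 ∈ H e'.1 ∧ e.1 ≠ e'.1 ∧ part e = part e' then
                aF part Qs b x e * aF part Qs b x e' else 0)) :=
        Finset.sum_congr rfl fun e _ => Finset.sum_congr rfl fun e' _ =>
          (step2 e e').trans (key e e')
    _ = (unionSize H : ℝ) + TF H part Qs b x := by
        rw [TF]
        simp only [Finset.sum_add_distrib]
        congr 1
        rw [← ind_sum H]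
        exact Finset.sum_congr rfl fun e _ => diag e

lemma count_sigma (i j : Fin k) :
    ((Finset.univ.filter fun σ : Fin k → Bool => σ i = true ∧ σ j = false).card : ℝ)
      = if i ≠ j then 2 ^ k / 4 else 0 := by
  by_cases hij : i = j
  · subst hij
    have hempty : (Finset.univ.filter fun σ : Fin k → Bool => σ i = true ∧ σ i = false) = ∅ := by
      apply Finset.filter_false_of_mem
      rintro σ - ⟨h1, h2⟩
      rw [h1] at h2
      simp at h2
    simp [hempty]
  · simp only [hij, ne_eq, not_false_iff, if_true]
    have hk : 2 ≤ k := by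
      have : 1 < Fintype.card (Fin k) :=
        Fintype.one_lt_card_iff_nontrivial.2 ⟨⟨i, j, hij⟩⟩
      simp at this; omega
    have hcard : (Finset.univ.filter fun σ : Fin k → Bool => σ i = true ∧ σ j = false).card
        = 2 ^ (k - 2) := by
      rw [← Fintype.card_subtype]
      have hji : (j : Fin k) ≠ i := fun h => hij h.symm
      have e : {σ : Fin k → Bool // σ i = true ∧ σ j = false} ≃
          ({m : Fin k // m ≠ i ∧ m ≠ j} → Bool) :=
        { toFun := fun σ m => σ.1 m.1
          invFun := fun g => ⟨fun m => if h : m = i then true else if h' : m = j then false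
            else g ⟨m, h, h'⟩, ⟨by simp, by simp [hji]⟩⟩
          left_inv := by
            rintro ⟨σ, h1, h2⟩
            ext m
            by_cases hm : m = i
            · subst hm; simp [h1]
            · by_cases hm' : m = j
              · subst hm'; simp [hm, h2]
              · simp [hm, hm']
          right_inv := by
            intro g
            ext m
            have h1 := m.2.1
            have h2 := m.2.2
            simp [h1, h2] }
      rw [Fintype.card_congr e, Fintype.card_fun]
      congr 1
      rw [Fintype.card_subtype]
      have hset : (Finset.univ.filter fun m : Fin k => m ≠ i ∧ m ≠ j)
          = Finset.univ \ {i, j} := by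
        ext m; simp [not_or]
      rw [hset, Finset.card_sdiff_of_subset (Finset.subset_univ _), Finset.card_univ,
        Fintype.card_fin, Finset.card_insert_of_notMem (by simp [hij]),
        Finset.card_singleton]
    rw [hcard]
    push_cast
    rw [eq_div_iff (by norm_num : (4 : ℝ) ≠ 0)]
    have h4 : (4 : ℝ) = 2 ^ 2 := by norm_num
    rw [h4, ← pow_add, Nat.sub_add_cancel hk]

lemma sum_mem_univ {α : Type*} [Fintype α] [DecidableEq α] (s : Finset α) (f : α → ℝ) :
    ∑ a ∈ s, f a = ∑ a : α, if a ∈ s then f a else 0 := by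
  rw [Finset.sum_ite_mem, Finset.univ_inter]

lemma fsum (x : Fin n → ℤˣ) :
    ∑ σ : Fin k → Bool, fPoly H part Qs b σ x
      = 2 ^ k / 4 * TF H part Qs b x := by
  have hA : ∀ σ : Fin k → Bool, fPoly H part Qs b σ x
      = ∑ i : Fin k, ∑ j : Fin k, ∑ C : Finset (Fin n), ∑ C' : Finset (Fin n),
          if σ i = true ∧ σ j = false ∧ C ∈ H i ∧ C' ∈ H j ∧ part (i, C) = part (j, C') then
            aF part Qs b x (i, C) * aF part Qs b x (j, C') else 0 := by
    intro σ
    rw [fPoly, Finset.sum_filter]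
    refine Finset.sum_congr rfl fun i _ => ?_
    by_cases hi : σ i = true
    · simp only [hi, if_true, true_and]
      rw [Finset.sum_filter]
      refine Finset.sum_congr rfl fun j _ => ?_
      by_cases hj : σ j = false
      · simp only [hj, if_true, true_and]
        rw [sum_mem_univ (H i), Finset.mul_sum]
        refine Finset.sum_congr rfl fun C _ => ?_
        by_cases hC : C ∈ H i
        · simp only [hC, if_true, true_and]
          rw [sum_mem_univ (H j), Finset.mul_sum]
          refine Finset.sum_congr rfl fun C' _ => ?_
          by_cases hC' : C' ∈ H j
          · simp only [hC', if_true, true_and]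
            split_ifs with hpp
            · rw [aF, aF]
              dsimp only
              rw [← hpp]
              ring
            · ring
          · simp [hC']
        · simp [hC]
      · simp [hj]
    · simp [hi]
  have hcount : ∀ (i j : Fin k) (c : ℝ),
      (∑ σ : Fin k → Bool, if σ i = true ∧ σ j = false then c else 0)
        = (if i ≠ j then (2 : ℝ) ^ k / 4 else 0) * c := by
    intro i j c
    rw [← Finset.sum_filter, Finset.sum_const, nsmul_eq_mul, count_sigma]
  have hTF : TF H part Qs b x = ∑ i : Fin k, ∑ j : Fin k, ∑ C : Finset (Fin n),
      ∑ C' : Finset (Fin n),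
        if C ∈ H i ∧ C' ∈ H j ∧ i ≠ j ∧ part (i, C) = part (j, C') then
          aF part Qs b x (i, C) * aF part Qs b x (j, C') else 0 := by
    rw [TF, Fintype.sum_prod_type]
    refine Finset.sum_congr rfl fun i _ => ?_
    calc ∑ C : Finset (Fin n), ∑ e' : Fin k × Finset (Fin n),
          (if (i, C).2 ∈ H (i, C).1 ∧ e'.2 ∈ H e'.1 ∧ (i, C).1 ≠ e'.1 ∧
              part (i, C) = part e' then
            aF part Qs b x (i, C) * aF part Qs b x e' else 0)
        = ∑ C : Finset (Fin n), ∑ j : Fin k, ∑ C' : Finset (Fin n),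
            (if C ∈ H i ∧ C' ∈ H j ∧ i ≠ j ∧ part (i, C) = part (j, C') then
              aF part Qs b x (i, C) * aF part Qs b x (j, C') else 0) := by
          refine Finset.sum_congr rfl fun C _ => ?_
          rw [Fintype.sum_prod_type]
      _ = ∑ j : Fin k, ∑ C : Finset (Fin n), ∑ C' : Finset (Fin n),
            (if C ∈ H i ∧ C' ∈ H j ∧ i ≠ j ∧ part (i, C) = part (j, C') then
              aF part Qs b x (i, C) * aF part Qs b x (j, C') else 0) := Finset.sum_comm
  calc ∑ σ : Fin k → Bool, fPoly H part Qs b σ x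
      = ∑ σ : Fin k → Bool, ∑ i : Fin k, ∑ j : Fin k, ∑ C : Finset (Fin n),
          ∑ C' : Finset (Fin n),
          (if σ i = true ∧ σ j = false ∧ C ∈ H i ∧ C' ∈ H j ∧
              part (i, C) = part (j, C') then
            aF part Qs b x (i, C) * aF part Qs b x (j, C') else 0) :=
        Finset.sum_congr rfl fun σ _ => hA σ
    _ = ∑ i : Fin k, ∑ j : Fin k, ∑ C : Finset (Fin n), ∑ C' : Finset (Fin n),
          ∑ σ : Fin k → Bool,
          (if σ i = true ∧ σ j = false ∧ C ∈ H i ∧ C' ∈ H j ∧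
              part (i, C) = part (j, C') then
            aF part Qs b x (i, C) * aF part Qs b x (j, C') else 0) := by
        rw [Finset.sum_comm]
        refine Finset.sum_congr rfl fun i _ => ?_
        rw [Finset.sum_comm]
        refine Finset.sum_congr rfl fun j _ => ?_
        rw [Finset.sum_comm]
        refine Finset.sum_congr rfl fun C _ => ?_
        rw [Finset.sum_comm]
    _ = ∑ i : Fin k, ∑ j : Fin k, ∑ C : Finset (Fin n), ∑ C' : Finset (Fin n),
          (if i ≠ j then (2 : ℝ) ^ k / 4 else 0) *
            (if C ∈ H i ∧ C' ∈ H j ∧ part (i, C) = part (j, C') then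
              aF part Qs b x (i, C) * aF part Qs b x (j, C') else 0) := by
        refine Finset.sum_congr rfl fun i _ => Finset.sum_congr rfl fun j _ =>
          Finset.sum_congr rfl fun C _ => Finset.sum_congr rfl fun C' _ => ?_
        by_cases hB : C ∈ H i ∧ C' ∈ H j ∧ part (i, C) = part (j, C')
        · obtain ⟨h3, h4, h5⟩ := hB
          simp only [h3, h4, h5, and_true, true_and, if_true]
          exact hcount i j _
        · have hz : ∀ σ : Fin k → Bool, ¬(σ i = true ∧ σ j = false ∧ C ∈ H i ∧
              C' ∈ H j ∧ part (i, C) = part (j, C')) := by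
            rintro σ ⟨-, -, h3, h4, h5⟩
            exact hB ⟨h3, h4, h5⟩
          simp [hz, hB]
    _ = (2 : ℝ) ^ k / 4 * ∑ i : Fin k, ∑ j : Fin k, ∑ C : Finset (Fin n),
          ∑ C' : Finset (Fin n),
          (if C ∈ H i ∧ C' ∈ H j ∧ i ≠ j ∧ part (i, C) = part (j, C') then
            aF part Qs b x (i, C) * aF part Qs b x (j, C') else 0) := by
        simp only [Finset.mul_sum]
        refine Finset.sum_congr rfl fun i _ => Finset.sum_congr rfl fun j _ =>
          Finset.sum_congr rfl fun C _ => Finset.sum_congr rfl fun C' _ => ?_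
        by_cases hij : i = j <;> simp [hij]
    _ = 2 ^ k / 4 * TF H part Qs b x := by rw [hTF]

lemma fiber_sum :
    ∑ θ : Fin p, ((Finset.univ.filter (fun e : Fin k × Finset (Fin n) =>
      e.2 ∈ H e.1 ∧ part e = θ)).card : ℝ) = (unionSize H : ℝ) := by
  have h1 : (Finset.univ.filter (fun e : Fin k × Finset (Fin n) => e.2 ∈ H e.1)).card
      = ∑ θ : Fin p, (Finset.univ.filter (fun e : Fin k × Finset (Fin n) =>
          e.2 ∈ H e.1 ∧ part e = θ)).card := by
    rw [Finset.card_eq_sum_card_fiberwise (f := part) (t := Finset.univ)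
      (fun _ _ => Finset.mem_univ _)]
    exact Finset.sum_congr rfl fun θ _ => by rw [Finset.filter_filter]
  have h2 : (Finset.univ.filter (fun e : Fin k × Finset (Fin n) =>
      e.2 ∈ H e.1)).card = unionSize H := by
    rw [Finset.card_filter, Fintype.sum_prod_type, unionSize]
    refine Finset.sum_congr rfl fun i _ => ?_
    dsimp only
    conv_rhs => rw [← Finset.filter_univ_mem (H i), Finset.card_filter]
  rw [← Nat.cast_sum, ← h1, h2]

end Aux
/-- The Cauchy–Schwarz trick. If `H 1, …, H k` are `q`-uniform
matchings on `[n]` whose disjoint union is `t`-approximately strongly regular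
with partition pieces (given by `part`) and `t`-element sets `Qs θ`, then,
writing `d_t` for the maximum co-degree of `t`-sets, for every `b ∈ {±1}^k`:
`val(Ψ_b)² ≤ 2|H|²/d_t + (8|H|/d_t)·E_{(L,R)}[val(f_{L,R,t})]`, the expectation
being over a uniformly random partition `L ⊔ R = [k]`. -/
theorem stmt10 (q t n k p : ℕ) (ht1 : 1 ≤ t) (htq : t ≤ q)
    (H : Fin k → Finset (Finset (Fin n)))
    (part : Fin k × Finset (Fin n) → Fin p)
    (Qs : Fin p → Finset (Fin n))
    (huniform : ∀ i, ∀ C ∈ H i, C.card = q)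
    (hmatch : ∀ i, ∀ C ∈ H i, ∀ C' ∈ H i, C ≠ C' → Disjoint C C')
    (hQcard : ∀ θ, (Qs θ).card = t)
    (hQsub : ∀ i, ∀ C ∈ H i, Qs (part (i, C)) ⊆ C)
    (hsize : ∀ θ : Fin p,
      (unionMaxCodeg H t : ℝ) / 2 ≤
        ((Finset.univ.filter (fun e : Fin k × Finset (Fin n) =>
          e.2 ∈ H e.1 ∧ part e = θ)).card : ℝ) ∧
      ((Finset.univ.filter (fun e : Fin k × Finset (Fin n) =>
          e.2 ∈ H e.1 ∧ part e = θ)).card : ℝ) ≤ (unionMaxCodeg H t : ℝ))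
    (hgood : GoodIndex n q (fun r => (unionMaxCodeg H r : ℝ)) t)
    (b : Fin k → ℤˣ) :
    (⨆ x : Fin n → ℤˣ, psiPoly H b x) ^ 2 ≤
      2 * (unionSize H : ℝ) ^ 2 / (unionMaxCodeg H t : ℝ)
        + 8 * (unionSize H : ℝ) / (unionMaxCodeg H t : ℝ) *
          ((2 ^ k : ℝ)⁻¹ * ∑ σ : Fin k → Bool,
            ⨆ x : Fin n → ℤˣ, fPoly H part Qs b σ x) := by
  have hbddpsi : BddAbove (Set.range fun x : Fin n → ℤˣ => psiPoly H b x) :=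
    Set.Finite.bddAbove (Set.finite_range _)
  have hbddf : ∀ σ : Fin k → Bool,
      BddAbove (Set.range fun x : Fin n → ℤˣ => fPoly H part Qs b σ x) :=
    fun σ => Set.Finite.bddAbove (Set.finite_range _)
  by_cases hd : unionMaxCodeg H t = 0
  · have hfib : ∀ θ : Fin p, ((Finset.univ.filter (fun e : Fin k × Finset (Fin n) =>
        e.2 ∈ H e.1 ∧ part e = θ)).card : ℝ) = 0 := by
      intro θ
      have h2 := (hsize θ).2
      rw [hd] at h2
      push_cast at h2
      have := Nat.cast_nonneg (α := ℝ) ((Finset.univ.filter (fun e : Fin k × Finset (Fin n) =>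
        e.2 ∈ H e.1 ∧ part e = θ)).card)
      linarith
    have hsize0 : (unionSize H : ℝ) = 0 := by
      rw [← fiber_sum H part]
      simp [hfib]
    have hHempty : ∀ i, H i = ∅ := by
      have h0 : unionSize H = 0 := by exact_mod_cast hsize0
      rw [unionSize, Finset.sum_eq_zero_iff] at h0
      intro i
      exact Finset.card_eq_zero.1 (h0 i (Finset.mem_univ i))
    have hpsi0 : ∀ x : Fin n → ℤˣ, psiPoly H b x = 0 := by
      intro x; simp [psiPoly, hHempty]
    have hf0 : ∀ (σ : Fin k → Bool) (x : Fin n → ℤˣ), fPoly H part Qs b σ x = 0 := by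
      intro σ x; simp [fPoly, hHempty]
    have e1 : (⨆ x : Fin n → ℤˣ, psiPoly H b x) = 0 := by
      simp only [hpsi0]; exact ciSup_const
    have e2 : ∀ σ : Fin k → Bool, (⨆ x : Fin n → ℤˣ, fPoly H part Qs b σ x) = 0 := by
      intro σ; simp only [hf0]; exact ciSup_const
    rw [e1, hsize0]
    simp [e2]
  · have hDpos : (0 : ℝ) < (unionMaxCodeg H t : ℝ) := by
      exact_mod_cast Nat.pos_of_ne_zero hd
    obtain ⟨x₀, -, hx₀⟩ := Finset.exists_max_image (Finset.univ : Finset (Fin n → ℤˣ))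
      (psiPoly H b) Finset.univ_nonempty
    have hsup : (⨆ x : Fin n → ℤˣ, psiPoly H b x) = psiPoly H b x₀ :=
      le_antisymm (ciSup_le fun y => hx₀ y (Finset.mem_univ y)) (le_ciSup hbddpsi x₀)
    rw [hsup]
    have hCS : psiPoly H b x₀ ^ 2 ≤ (p : ℝ) * ∑ θ : Fin p, (SF H part Qs b x₀ θ) ^ 2 := by
      rw [psi_eq H part Qs b x₀ hQsub]
      have h1 : (∑ θ : Fin p, (∏ u ∈ Qs θ, ((x₀ u : ℤ) : ℝ)) * SF H part Qs b x₀ θ) ^ 2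
          ≤ (Finset.univ : Finset (Fin p)).card *
            ∑ θ : Fin p, ((∏ u ∈ Qs θ, ((x₀ u : ℤ) : ℝ)) * SF H part Qs b x₀ θ) ^ 2 :=
        sq_sum_le_card_mul_sum_sq
      rw [Finset.card_univ, Fintype.card_fin] at h1
      refine h1.trans (le_of_eq ?_)
      congr 1
      refine Finset.sum_congr rfl fun θ _ => ?_
      rw [mul_pow, prodX_sq, one_mul]
    have hSsq := S_sq H part Qs b x₀ t ht1 hQcard hQsub hmatch
    have hpD : (p : ℝ) * ((unionMaxCodeg H t : ℝ) / 2) ≤ (unionSize H : ℝ) := by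
      rw [← fiber_sum H part]
      calc (p : ℝ) * ((unionMaxCodeg H t : ℝ) / 2)
          = ∑ _θ : Fin p, ((unionMaxCodeg H t : ℝ) / 2) := by
            rw [Finset.sum_const, Finset.card_univ, Fintype.card_fin, nsmul_eq_mul]
        _ ≤ ∑ θ : Fin p, ((Finset.univ.filter (fun e : Fin k × Finset (Fin n) =>
              e.2 ∈ H e.1 ∧ part e = θ)).card : ℝ) :=
            Finset.sum_le_sum fun θ _ => (hsize θ).1
    have hp2 : (p : ℝ) ≤ 2 * (unionSize H : ℝ) / (unionMaxCodeg H t : ℝ) := by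
      rw [le_div_iff₀ hDpos]
      linarith
    have hTb : TF H part Qs b x₀ ≤ 4 * ((2 ^ k : ℝ)⁻¹ *
        ∑ σ : Fin k → Bool, ⨆ x : Fin n → ℤˣ, fPoly H part Qs b σ x) := by
      have h1 : ∑ σ : Fin k → Bool, fPoly H part Qs b σ x₀
          ≤ ∑ σ : Fin k → Bool, ⨆ x : Fin n → ℤˣ, fPoly H part Qs b σ x :=
        Finset.sum_le_sum fun σ _ => le_ciSup (hbddf σ) x₀
      rw [fsum H part Qs b x₀] at h1
      have h2k : (0 : ℝ) < 2 ^ k := by positivity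
      calc TF H part Qs b x₀
          = (4 / 2 ^ k) * ((2 : ℝ) ^ k / 4 * TF H part Qs b x₀) := by
            field_simp
        _ ≤ (4 / 2 ^ k) * ∑ σ : Fin k → Bool, ⨆ x : Fin n → ℤˣ, fPoly H part Qs b σ x :=
            mul_le_mul_of_nonneg_left h1 (by positivity)
        _ = 4 * ((2 ^ k : ℝ)⁻¹ *
            ∑ σ : Fin k → Bool, ⨆ x : Fin n → ℤˣ, fPoly H part Qs b σ x) := by
            ring
    have hSnn : 0 ≤ ∑ θ : Fin p, (SF H part Qs b x₀ θ) ^ 2 :=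
      Finset.sum_nonneg fun θ _ => sq_nonneg _
    have hUnn : (0 : ℝ) ≤ (unionSize H : ℝ) := Nat.cast_nonneg _
    have hfac : (0 : ℝ) ≤ 2 * (unionSize H : ℝ) / (unionMaxCodeg H t : ℝ) := by positivity
    calc psiPoly H b x₀ ^ 2
        ≤ (p : ℝ) * ∑ θ : Fin p, (SF H part Qs b x₀ θ) ^ 2 := hCS
      _ ≤ (2 * (unionSize H : ℝ) / (unionMaxCodeg H t : ℝ)) *
            ∑ θ : Fin p, (SF H part Qs b x₀ θ) ^ 2 :=
          mul_le_mul_of_nonneg_right hp2 hSnn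
      _ = (2 * (unionSize H : ℝ) / (unionMaxCodeg H t : ℝ)) *
            ((unionSize H : ℝ) + TF H part Qs b x₀) := by rw [hSsq]
      _ ≤ (2 * (unionSize H : ℝ) / (unionMaxCodeg H t : ℝ)) *
            ((unionSize H : ℝ) + 4 * ((2 ^ k : ℝ)⁻¹ *
              ∑ σ : Fin k → Bool, ⨆ x : Fin n → ℤˣ, fPoly H part Qs b σ x)) :=
          mul_le_mul_of_nonneg_left (by linarith) hfac
      _ = 2 * (unionSize H : ℝ) ^ 2 / (unionMaxCodeg H t : ℝ)
            + 8 * (unionSize H : ℝ) / (unionMaxCodeg H t : ℝ) *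
              ((2 ^ k : ℝ)⁻¹ * ∑ σ : Fin k → Bool,
                ⨆ x : Fin n → ℤˣ, fPoly H part Qs b σ x) := by
          field_simp
          ring
end

section
/- Let n ≥ 1, and let m, ℓ be integers with 0 ≤ m ≤ ℓ ≤ n. Then C(m, ⌊m/2⌋)² · C(2n − 2m, ℓ − m) · 2^{[m odd]} ≥ C(2n, ℓ) · (ℓ/(2n))^m, where C(a,b) denotes the binomial coefficient, and [m odd] = 1 if m is odd and 0 otherwise. -/
open Nat

def bbD (m : ℕ) : ℕ := (m.choose (m / 2))^2 * 2 ^ (if Odd m then 1 else 0)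

lemma bbD_even (k : ℕ) : bbD (2*k) = Nat.centralBinom k ^ 2 := by
  have h1 : (2*k)/2 = k := by omega
  have h2 : ¬ Odd (2*k) := (Nat.not_odd_iff_even).mpr (even_two_mul k)
  simp [bbD, h1, h2, Nat.centralBinom_eq_two_mul_choose]

lemma bbD_odd (k : ℕ) : 2 * bbD (2*k+1) = Nat.centralBinom (k+1) ^ 2 := by
  have h1 : (2*k+1)/2 = k := by omega
  have h2 : Odd (2*k+1) := ⟨k, by omega⟩
  have h3 : Nat.centralBinom (k+1) = 2 * ((2*k+1).choose k) := by
    rw [Nat.centralBinom_eq_two_mul_choose]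
    have e : 2*(k+1) = (2*k+1)+1 := by omega
    rw [e, Nat.choose_succ_succ', Nat.choose_symm_half]
    omega
  rw [bbD, h1, if_pos h2, h3]; ring

lemma two_pow_le_centralBinom (k : ℕ) : 2^k ≤ Nat.centralBinom k := by
  induction k with
  | zero => simp [Nat.centralBinom]
  | succ k ih =>
      have h := Nat.succ_mul_centralBinom_succ k
      have h2 : (k+1) * 2^(k+1) ≤ (k+1) * Nat.centralBinom (k+1) := by
        rw [h]
        calc (k+1)*2^(k+1) = 2*(k+1)*2^k := by ring
          _ ≤ 2*(2*k+1)*2^k := Nat.mul_le_mul_right _ (by omega)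
          _ ≤ 2*(2*k+1)*Nat.centralBinom k := Nat.mul_le_mul_left _ ih
      exact Nat.le_of_mul_le_mul_left h2 (by omega)

lemma two_pow_le_bbD (m : ℕ) : 2^m ≤ bbD m := by
  rcases Nat.even_or_odd m with he | ho
  · obtain ⟨k, hk⟩ := he
    obtain rfl : m = 2*k := by omega
    rw [bbD_even]
    calc 2^(2*k) = (2^k)^2 := by rw [← pow_mul, Nat.mul_comm]
      _ ≤ Nat.centralBinom k ^ 2 := Nat.pow_le_pow_left (two_pow_le_centralBinom k) 2
  · obtain ⟨k, hk⟩ := ho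
    obtain rfl : m = 2*k+1 := by omega
    have h : 2 * 2^(2*k+1) ≤ 2 * bbD (2*k+1) := by
      rw [bbD_odd]
      calc 2*2^(2*k+1) = (2^(k+1))^2 := by ring
        _ ≤ Nat.centralBinom (k+1) ^ 2 := Nat.pow_le_pow_left (two_pow_le_centralBinom (k+1)) 2
    exact Nat.le_of_mul_le_mul_left h (by omega)

lemma two_mul_pow_le (t : ℕ) (ht : 1 ≤ t) : 2*(t+2)^t ≤ 15*t^t := by
  have ht' : (0:ℝ) < (t:ℝ) := by exact_mod_cast ht
  have key : ((t:ℝ)+2)^t ≤ (t:ℝ)^t * Real.exp 2 := by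
    have h0 : (t:ℝ)+2 = (t:ℝ)*(1+2/(t:ℝ)) := by field_simp
    have h1 : (0:ℝ) ≤ 1 + 2/(t:ℝ) := by positivity
    have h2 : 1 + 2/(t:ℝ) ≤ Real.exp (2/(t:ℝ)) := by
      have := Real.add_one_le_exp (2/(t:ℝ)); linarith
    calc ((t:ℝ)+2)^t = (t:ℝ)^t * (1+2/(t:ℝ))^t := by rw [h0, mul_pow]
      _ ≤ (t:ℝ)^t * (Real.exp (2/(t:ℝ)))^t := by gcongr
      _ = (t:ℝ)^t * Real.exp 2 := by
          rw [← Real.exp_nat_mul]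
          congr 1
          field_simp
  have hexp : Real.exp 2 ≤ 7.5 := by
    have h := Real.exp_one_lt_d9
    have h2 : Real.exp 2 = Real.exp 1 * Real.exp 1 := by
      rw [← Real.exp_add]; norm_num
    nlinarith [Real.exp_pos 1]
  have hfin : (2:ℝ)*((t:ℝ)+2)^t ≤ 15*(t:ℝ)^t := by
    nlinarith [pow_nonneg ht'.le t, key, hexp]
  exact_mod_cast hfin

lemma pow_self_le_bbD (m : ℕ) : m^m ≤ m ! * bbD m := by
  induction m using Nat.strong_induction_on with
  | _ m IH =>
  by_cases h6 : m < 6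
  · interval_cases m <;> decide
  · push_neg at h6
    obtain ⟨t, rfl⟩ : ∃ t, m = t + 2 := ⟨m-2, by omega⟩
    have ht4 : 4 ≤ t := by omega
    have iht : t^t ≤ t ! * bbD t := IH t (by omega)
    have hstep : 15*(t+2)*bbD t ≤ 2*(t+1)*bbD (t+2) := by
      rcases Nat.even_or_odd t with he | ho
      · obtain ⟨k, hk⟩ := he
        obtain rfl : t = 2*k := by omega
        have hk2 : 2 ≤ k := by omega
        have e : 2*k+2 = 2*(k+1) := by ring
        rw [e, bbD_even, bbD_even]
        have hcb := Nat.succ_mul_centralBinom_succ k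
        have e2 : (k+1)^2 * Nat.centralBinom (k+1)^2 = 4*(2*k+1)^2*Nat.centralBinom k^2 := by
          calc (k+1)^2 * Nat.centralBinom (k+1)^2 = ((k+1) * Nat.centralBinom (k+1))^2 := by ring
            _ = (2*(2*k+1)*Nat.centralBinom k)^2 := by rw [hcb]
            _ = 4*(2*k+1)^2*Nat.centralBinom k^2 := by ring
        have key : (k+1)^2 * (15*(2*(k+1))*Nat.centralBinom k^2)
            ≤ (k+1)^2 * (2*(2*k+1)*Nat.centralBinom (k+1)^2) := by
          have hco : 15*(2*(k+1))*(k+1)^2 ≤ 8*(2*k+1)^3 := by nlinarith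
          calc (k+1)^2 * (15*(2*(k+1))*Nat.centralBinom k^2)
              = (15*(2*(k+1))*(k+1)^2) * Nat.centralBinom k^2 := by ring
            _ ≤ (8*(2*k+1)^3) * Nat.centralBinom k^2 := Nat.mul_le_mul_right _ hco
            _ = 2*(2*k+1)*(4*(2*k+1)^2*Nat.centralBinom k^2) := by ring
            _ = 2*(2*k+1)*((k+1)^2*Nat.centralBinom (k+1)^2) := by rw [e2]
            _ = (k+1)^2 * (2*(2*k+1)*Nat.centralBinom (k+1)^2) := by ring
        exact Nat.le_of_mul_le_mul_left key (by positivity)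
      · obtain ⟨k, hk⟩ := ho
        obtain rfl : t = 2*k+1 := by omega
        have hk2 : 2 ≤ k := by omega
        have e : 2*k+1+2 = 2*(k+1)+1 := by ring
        rw [e]
        have hcb := Nat.succ_mul_centralBinom_succ (k+1)
        -- multiply target by 2*(k+2)^2
        have key : (2*(k+2)^2) * (15*(2*k+1+2)*bbD (2*k+1))
            ≤ (2*(k+2)^2) * (2*(2*k+1+1)*bbD (2*(k+1)+1)) := by
          have e4 : (k+2)^2 * Nat.centralBinom (k+2)^2 = 4*(2*k+3)^2*Nat.centralBinom (k+1)^2 := by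
            calc (k+2)^2 * Nat.centralBinom (k+2)^2 = ((k+2) * Nat.centralBinom (k+2))^2 := by ring
              _ = (2*(2*(k+1)+1)*Nat.centralBinom (k+1))^2 := by rw [hcb]
              _ = 4*(2*k+3)^2*Nat.centralBinom (k+1)^2 := by ring
          have hbo1 : 2 * bbD (2*k+1) = Nat.centralBinom (k+1) ^ 2 := bbD_odd k
          have hbo2 : 2 * bbD (2*(k+1)+1) = Nat.centralBinom (k+2) ^ 2 := bbD_odd (k+1)
          have hco : 15*(2*k+3)*(k+2)^2 ≤ 8*(2*k+2)*(2*k+3)^2 := by nlinarith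
          calc (2*(k+2)^2) * (15*(2*k+1+2)*bbD (2*k+1))
              = ((k+2)^2*(15*(2*k+3))) * (2*bbD (2*k+1)) := by ring
            _ = (15*(2*k+3)*(k+2)^2) * Nat.centralBinom (k+1)^2 := by rw [hbo1]; ring
            _ ≤ (8*(2*k+2)*(2*k+3)^2) * Nat.centralBinom (k+1)^2 := Nat.mul_le_mul_right _ hco
            _ = (2*(2*k+2)) * (4*(2*k+3)^2*Nat.centralBinom (k+1)^2) := by ring
            _ = (2*(2*k+2)) * ((k+2)^2 * Nat.centralBinom (k+2)^2) := by rw [e4]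
            _ = ((k+2)^2*(2*(2*k+2))) * (2*bbD (2*(k+1)+1)) := by rw [hbo2]; ring
            _ = (2*(k+2)^2) * (2*(2*k+1+1)*bbD (2*(k+1)+1)) := by ring
        exact Nat.le_of_mul_le_mul_left key (by positivity)
    have h15 : 2*(t+2)^t ≤ 15*t^t := two_mul_pow_le t (by omega)
    have main : 2*((t+2)^(t+2)) ≤ 2*((t+2)! * bbD (t+2)) := by
      calc 2*((t+2)^(t+2)) = (t+2)^2*(2*(t+2)^t) := by ring
        _ ≤ (t+2)^2*(15*t^t) := Nat.mul_le_mul_left _ h15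
        _ = 15*(t+2)^2*t^t := by ring
        _ ≤ 15*(t+2)^2*(t ! * bbD t) := Nat.mul_le_mul_left _ iht
        _ = t ! * ((15*(t+2)*bbD t)*(t+2)) := by ring
        _ ≤ t ! * ((2*(t+1)*bbD (t+2))*(t+2)) :=
            Nat.mul_le_mul_left _ (Nat.mul_le_mul_right _ hstep)
        _ = 2*((t+2)! * bbD (t+2)) := by
            simp [Nat.factorial_succ]; ring
    exact Nat.le_of_mul_le_mul_left main (by omega)

lemma key_identity {N l m : ℕ} (h1 : m ≤ l) (h2 : l + m ≤ N) :
    N.choose l * (l.descFactorial m * (N-l).descFactorial m)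
      = (N - 2*m).choose (l - m) * N.descFactorial (2*m) := by
  have hlN : l ≤ N := by omega
  have c1 : (l-m)! * l.descFactorial m = l ! := Nat.factorial_mul_descFactorial h1
  have c2 : (N-l-m)! * (N-l).descFactorial m = (N-l)! := by
    have := Nat.factorial_mul_descFactorial (show m ≤ N-l by omega)
    rwa [show N-l-m = N-l-m from rfl] at this
  have c3 : (N-2*m)! * N.descFactorial (2*m) = N ! :=
    Nat.factorial_mul_descFactorial (by omega)
  have c4 : N.choose l * l ! * (N-l)! = N ! := Nat.choose_mul_factorial_mul_factorial hlN
  have c5 : (N-2*m).choose (l-m) * (l-m)! * ((N-2*m)-(l-m))! = (N-2*m)! :=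
    Nat.choose_mul_factorial_mul_factorial (by omega)
  have e : (N-2*m)-(l-m) = N-l-m := by omega
  rw [e] at c5
  apply Nat.eq_of_mul_eq_mul_right (show 0 < (l-m)! * (N-l-m)! from
    Nat.mul_pos (Nat.factorial_pos _) (Nat.factorial_pos _))
  calc N.choose l * (l.descFactorial m * (N-l).descFactorial m) * ((l-m)! * (N-l-m)!)
      = N.choose l * ((l-m)! * l.descFactorial m) * ((N-l-m)! * (N-l).descFactorial m) := by ring
    _ = N.choose l * l ! * (N-l)! := by rw [c1, c2]
    _ = N ! := c4
    _ = (N-2*m)! * N.descFactorial (2*m) := c3.symm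
    _ = ((N-2*m).choose (l-m) * (l-m)! * (N-l-m)!) * N.descFactorial (2*m) := by rw [c5]
    _ = (N-2*m).choose (l-m) * N.descFactorial (2*m) * ((l-m)! * (N-l-m)!) := by ring

lemma df_shift (N m : ℕ) : (N+1-m) * (N+1).descFactorial m = (N+1) * N.descFactorial m := by
  have h1 := Nat.descFactorial_succ (N+1) m
  have h2 := Nat.succ_descFactorial_succ N m
  rw [← h1, h2]

lemma df_double_le (a k : ℕ) : (2*a).descFactorial (2*k) ≤ 4^k * (a.descFactorial k)^2 := by
  induction k with
  | zero => simp
  | succ k ih =>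
    have e1 : 2*(k+1) = (2*k+1)+1 := by ring
    rw [e1, Nat.descFactorial_succ, Nat.descFactorial_succ]
    calc (2*a-(2*k+1)) * ((2*a-2*k) * (2*a).descFactorial (2*k))
        ≤ (2*(a-k)) * ((2*(a-k)) * (4^k * (a.descFactorial k)^2)) :=
          Nat.mul_le_mul (by omega) (Nat.mul_le_mul (by omega) ih)
      _ = 4^(k+1) * ((a-k) * a.descFactorial k)^2 := by ring
      _ = 4^(k+1) * (a.descFactorial (k+1))^2 := by rw [Nat.descFactorial_succ]

lemma df_pos {a k : ℕ} (h : k ≤ a) : 0 < a.descFactorial k :=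
  Nat.pos_of_ne_zero (fun h0 => by
    rw [Nat.descFactorial_eq_zero_iff_lt] at h0; omega)

lemma unimodal_min {v : ℕ → ℝ} {a b : ℕ}
    (hpos : ∀ L, a ≤ L → L ≤ b → 0 < v L)
    (hlc : ∀ j, a ≤ j → j + 2 ≤ b → v j * v (j+2) ≤ v (j+1)^2) :
    ∀ L, a ≤ L → L ≤ b → v a ≤ v L ∨ v b ≤ v L := by
  have cross : ∀ j k, a ≤ j → j ≤ k → k + 1 ≤ b → v j * v (k+1) ≤ v (j+1) * v k := by
    intro j k haj hjk hkb
    induction k, hjk using Nat.le_induction with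
    | base => exact le_of_eq (mul_comm _ _)
    | succ k hk IH =>
      have hkb' : k+1 ≤ b := by omega
      have IH' := IH hkb'
      have hl := hlc k (le_trans haj hk) (by omega)
      have vk := hpos k (le_trans haj hk) (by omega)
      have vj := hpos j haj (by omega)
      have vk1 := hpos (k+1) (by omega) (by omega)
      have h3 : v j * v (k+1+1) * v k ≤ v (j+1) * v (k+1) * v k := by
        calc v j * v (k+1+1) * v k = v j * (v k * v (k+2)) := by ring_nf
          _ ≤ v j * v (k+1)^2 := by
              apply mul_le_mul_of_nonneg_left hl vj.le
          _ = (v j * v (k+1)) * v (k+1) := by ring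
          _ ≤ (v (j+1) * v k) * v (k+1) := by
              apply mul_le_mul_of_nonneg_right IH' vk1.le
          _ = v (j+1) * v (k+1) * v k := by ring
      exact le_of_mul_le_mul_right h3 vk
  intro L haL hLb
  by_cases hup : ∀ j, a ≤ j → j + 1 ≤ L → v j ≤ v (j+1)
  · left
    have chain : ∀ M, a ≤ M → M ≤ L → v a ≤ v M := by
      intro M haM
      induction M, haM using Nat.le_induction with
      | base => intro _; exact le_refl _
      | succ M hM IH =>
        intro hML
        exact (IH (by omega)).trans (hup M hM (by omega))
    exact chain L haL (le_refl L)
  · right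
    push_neg at hup
    obtain ⟨j, haj, hjL, hdec⟩ := hup
    have down : ∀ k, L ≤ k → k ≤ b → v k ≤ v L := by
      intro k hLk
      induction k, hLk using Nat.le_induction with
      | base => intro _; exact le_refl _
      | succ k hk IH =>
        intro hkb
        have hstep : v (k+1) ≤ v k := by
          have hc := cross j k haj (by omega) (by omega)
          have hkpos := hpos k (by omega) (by omega)
          have hjpos := hpos j (by omega) (by omega)
          have h4 : v j * v (k+1) ≤ v j * v k := by
            calc v j * v (k+1) ≤ v (j+1) * v k := hc
              _ ≤ v j * v k := by
                  apply mul_le_mul_of_nonneg_right hdec.le hkpos.le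
          exact le_of_mul_le_mul_left h4 hjpos
        exact hstep.trans (IH (by omega))
    exact down b hLb (le_refl _)

lemma polyIneq (m : ℕ) (hm : 1 ≤ m) (x y : ℝ) (hx : (m:ℝ)+1 ≤ x) (hy : (m:ℝ)+1 ≤ y) :
    (x-m)*(x+1)*((y+1)*(y-m))*(x^2)^m ≤ (x*(x+1-m))*((y+1-m)*y)*((x^2-1)^m) := by
  have hm1 : (1:ℝ) ≤ (m:ℝ) := by exact_mod_cast hm
  have hx1 : (1:ℝ) ≤ x := by linarith
  have hx0 : (0:ℝ) < x := by linarith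
  have hy0 : (0:ℝ) < y := by linarith
  have hx2 : (1:ℝ) ≤ x^2 := by nlinarith
  set W : ℝ := (x^2)^(m-1) with hW
  have hWpos : (0:ℝ) < W := by positivity
  have hxm : (x^2)^m = W * x^2 := by
    rw [hW, ← pow_succ]
    congr 1
    omega
  have hber : W * (x^2 - m) ≤ (x^2-1)^m := by
    have hd1 : 1/x^2 ≤ 1 := by
      rw [div_le_one (by positivity)]; linarith
    have h2 : (-2:ℝ) ≤ -(1/x^2) := by linarith [show (0:ℝ) < 1/x^2 by positivity]
    have hb := one_add_mul_le_pow h2 m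
    have e1 : (1 + -(1/x^2)) = (x^2-1)/x^2 := by field_simp; ring
    have e2 : (1 + (m:ℝ)*(-(1/x^2))) * (x^2)^m = W*(x^2 - m) := by
      rw [hxm]; field_simp; ring
    calc W*(x^2-m) = (1 + (m:ℝ)*(-(1/x^2))) * (x^2)^m := e2.symm
      _ ≤ (1 + -(1/x^2))^m * (x^2)^m := by
          apply mul_le_mul_of_nonneg_right hb (by positivity)
      _ = ((x^2-1)/x^2)^m * (x^2)^m := by rw [e1]
      _ = (x^2-1)^m := by
          rw [div_pow, div_mul_cancel₀]
          positivity
  have hQ0 : (0:ℝ) ≤ (x+1)*(x-m) := mul_nonneg (by linarith) (by linarith)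
  have hS0 : (0:ℝ) ≤ (y+1)*(y-m) := mul_nonneg (by linarith) (by linarith)
  have hZ0 : (0:ℝ) ≤ (x^2-1)^m := pow_nonneg (by nlinarith) m
  have hA : ((x+1)*(x-m))*(W*x^2) ≤ ((x+1)*(x-m)+m)*(W*(x^2-m)) := by
    have hkey0 : (0:ℝ) ≤ (m:ℝ)*W*x*((m:ℝ)-1) := by
      apply mul_nonneg
      apply mul_nonneg
      apply mul_nonneg (by linarith) hWpos.le
      exact hx0.le
      linarith
    nlinarith [hkey0]
  have hB : ((x+1)*(x-m)+m)*(W*(x^2-m)) ≤ ((x+1)*(x-m)+m)*((x^2-1)^m) := by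
    apply mul_le_mul_of_nonneg_left hber (by linarith)
  have hC : ((x+1)*(x-m))*(W*x^2) ≤ ((x+1)*(x-m)+m)*((x^2-1)^m) := hA.trans hB
  calc (x-m)*(x+1)*((y+1)*(y-m))*(x^2)^m
      = (((x+1)*(x-m))*(W*x^2))*((y+1)*(y-m)) := by rw [hxm]; ring
    _ ≤ (((x+1)*(x-m)+m)*((x^2-1)^m))*((y+1)*(y-m)) := by
        apply mul_le_mul_of_nonneg_right hC hS0
    _ ≤ (((x+1)*(x-m)+m)*((x^2-1)^m))*((y+1)*(y-m)+m) := by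
        apply mul_le_mul_of_nonneg_left (by linarith) (by positivity)
    _ = (((x+1)*(x-m)+m)*((y+1)*(y-m)+m))*((x^2-1)^m) := by ring
    _ = (x*(x+1-m))*((y+1-m)*y)*((x^2-1)^m) := by ring_nf

lemma cross_step (m : ℕ) (hm : 1 ≤ m) (x y A B dj dj2 da da2 : ℝ)
    (hx : (m:ℝ)+1 ≤ x) (hy : (m:ℝ)+1 ≤ y) (hA : 0 < A) (hB : 0 < B)
    (hdj : x * dj = (x-m)*A) (hdj2 : (x+1-m)*dj2 = (x+1)*A)
    (hda : y * da = (y-m)*B) (hda2 : (y+1-m)*da2 = (y+1)*B) :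
    dj*da2 / (x-1)^m * (dj2*da / (x+1)^m) ≤ (A*B/x^m)^2 := by
  have hm1 : (1:ℝ) ≤ (m:ℝ) := by exact_mod_cast hm
  have hx0 : (0:ℝ) < x := by linarith
  have hx1 : (0:ℝ) < x - 1 := by linarith
  have hx1' : (0:ℝ) < x + 1 := by linarith
  have hxm : (0:ℝ) < x + 1 - m := by linarith
  have hy0 : (0:ℝ) < y := by linarith
  have hym : (0:ℝ) < y + 1 - m := by linarith
  rw [_root_.div_mul_div_comm]
  rw [_root_.div_pow]
  rw [div_le_div_iff₀ (by positivity) (by positivity)]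
  -- goal : dj*da2*(dj2*da) * (x^m)^2 ≤ (A*B)^2 * ((x-1)^m*(x+1)^m)
  have hc : (0:ℝ) < x*(x+1-m)*(y*(y+1-m)) := by positivity
  apply le_of_mul_le_mul_right _ hc
  have hxp : (x^m)^2 = (x^2)^m := by
    rw [← pow_mul, ← pow_mul, Nat.mul_comm]
  have hsq : (x^2-1)^m = (x-1)^m*(x+1)^m := by
    rw [← mul_pow]; congr 1; ring
  have key := polyIneq m hm x y hx hy
  calc dj*da2*(dj2*da)*(x^m)^2 * (x*(x+1-m)*(y*(y+1-m)))
      = ((x*dj) * ((x+1-m)*dj2)) * ((y*da) * ((y+1-m)*da2)) * (x^m)^2 := by ring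
    _ = ((x-m)*A*((x+1)*A)) * ((y-m)*B*((y+1)*B)) * (x^m)^2 := by
        rw [hdj, hdj2, hda, hda2]
    _ = (A*A*(B*B)) * ((x-m)*(x+1)*((y+1)*(y-m))*(x^2)^m) := by rw [hxp]; ring
    _ ≤ (A*A*(B*B)) * ((x*(x+1-m))*((y+1-m)*y)*((x^2-1)^m)) := by
        apply mul_le_mul_of_nonneg_left key (by positivity)
    _ = (A*B)^2*((x-1)^m*(x+1)^m) * (x*(x+1-m)*(y*(y+1-m))) := by rw [← hsq]; ring

lemma star (n m : ℕ) (hn : 1 ≤ n) (hm : 1 ≤ m) (hmn : m ≤ n) :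
    ∀ l, m ≤ l → l ≤ n →
    l^m * (2*n).descFactorial (2*m)
      ≤ bbD m * (2*n)^m * (l.descFactorial m * (2*n-l).descFactorial m) := by
  set v : ℕ → ℝ := fun L => ((L.descFactorial m * (2*n-L).descFactorial m : ℕ) : ℝ) / (L:ℝ)^m
    with hv
  have hpos : ∀ L, m ≤ L → L ≤ n → 0 < v L := by
    intro L h1 h2
    have hL0 : (0:ℝ) < (L:ℝ) := by exact_mod_cast show 0 < L by omega
    have d1 : 0 < L.descFactorial m * (2*n-L).descFactorial m :=
      Nat.mul_pos (df_pos h1) (df_pos (by omega))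
    have d1' : (0:ℝ) < ((L.descFactorial m * (2*n-L).descFactorial m : ℕ) : ℝ) := by
      exact_mod_cast d1
    exact div_pos d1' (by positivity)
  have hlc : ∀ j, m ≤ j → j + 2 ≤ n → v j * v (j+2) ≤ v (j+1)^2 := by
    intro j hj hj2
    set a := 2*n - (j+2) with ha
    have e1 : 2*n - j = a + 2 := by omega
    have e2 : 2*n - (j+1) = a + 1 := by omega
    have ham : m ≤ a := by omega
    have f1 := df_shift j m
    have f2 := df_shift (j+1) m
    have f3 := df_shift a m
    have f4 := df_shift (a+1) m
    have g1 : ((j+1-m : ℕ):ℝ) = (j:ℝ)+1-(m:ℝ) := by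
      rw [Nat.cast_sub (by omega)]; push_cast; ring
    have g2 : ((j+1+1-m : ℕ):ℝ) = (j:ℝ)+1+1-(m:ℝ) := by
      rw [Nat.cast_sub (by omega)]; push_cast; ring
    have g3 : ((a+1-m : ℕ):ℝ) = (a:ℝ)+1-(m:ℝ) := by
      rw [Nat.cast_sub (by omega)]; push_cast; ring
    have g4 : ((a+1+1-m : ℕ):ℝ) = (a:ℝ)+1+1-(m:ℝ) := by
      rw [Nat.cast_sub (by omega)]; push_cast; ring
    have f1' : ((j:ℝ)+1) * (j.descFactorial m : ℝ)
        = ((j:ℝ)+1-(m:ℝ)) * ((j+1).descFactorial m : ℝ) := by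
      have h := congrArg (fun t : ℕ => (t:ℝ)) f1
      push_cast at h
      rw [g1] at h
      linarith [h]
    have f2' : ((j:ℝ)+1+1-(m:ℝ)) * ((j+2).descFactorial m : ℝ)
        = ((j:ℝ)+1+1) * ((j+1).descFactorial m : ℝ) := by
      have h := congrArg (fun t : ℕ => (t:ℝ)) f2
      push_cast at h
      rw [g2] at h
      linarith [h]
    have f3' : ((a:ℝ)+1) * (a.descFactorial m : ℝ)
        = ((a:ℝ)+1-(m:ℝ)) * ((a+1).descFactorial m : ℝ) := by
      have h := congrArg (fun t : ℕ => (t:ℝ)) f3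
      push_cast at h
      rw [g3] at h
      linarith [h]
    have f4' : ((a:ℝ)+1+1-(m:ℝ)) * ((a+2).descFactorial m : ℝ)
        = ((a:ℝ)+1+1) * ((a+1).descFactorial m : ℝ) := by
      have h := congrArg (fun t : ℕ => (t:ℝ)) f4
      push_cast at h
      rw [g4] at h
      linarith [h]
    have hA : (0:ℝ) < ((j+1).descFactorial m : ℝ) := by
      exact_mod_cast df_pos (show m ≤ j+1 by omega)
    have hB : (0:ℝ) < ((a+1).descFactorial m : ℝ) := by
      exact_mod_cast df_pos (show m ≤ a+1 by omega)
    have hx : (m:ℝ)+1 ≤ (j:ℝ)+1 := by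
      have : (m:ℝ) ≤ (j:ℝ) := by exact_mod_cast hj
      linarith
    have hy : (m:ℝ)+1 ≤ (a:ℝ)+1 := by
      have : (m:ℝ) ≤ (a:ℝ) := by exact_mod_cast ham
      linarith
    have H := cross_step m hm ((j:ℝ)+1) ((a:ℝ)+1)
      ((j+1).descFactorial m : ℝ) ((a+1).descFactorial m : ℝ)
      (j.descFactorial m : ℝ) ((j+2).descFactorial m : ℝ)
      (a.descFactorial m : ℝ) ((a+2).descFactorial m : ℝ)
      hx hy hA hB f1' f2' f3' f4'
    have e3 : ((j:ℝ)+1)-1 = (j:ℝ) := by ring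
    have e4 : ((j:ℝ)+1)+1 = (j:ℝ)+1+1 := by ring
    rw [e3] at H
    simp only [hv]
    rw [e1, e2, ← ha]
    push_cast
    convert H using 3 <;> push_cast <;> ring
  have hEn : n^m * (2*n).descFactorial (2*m)
      ≤ (bbD m * (2*n)^m) * (n.descFactorial m * n.descFactorial m) := by
    calc n^m * (2*n).descFactorial (2*m)
        ≤ n^m * (4^m * (n.descFactorial m)^2) :=
          Nat.mul_le_mul_left _ (df_double_le n m)
      _ = 2^m * ((2*n)^m * (n.descFactorial m * n.descFactorial m)) := by
          rw [show (4:ℕ) = 2*2 by norm_num, Nat.mul_pow, Nat.mul_pow]; ring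
      _ ≤ bbD m * ((2*n)^m * (n.descFactorial m * n.descFactorial m)) :=
          Nat.mul_le_mul_right _ (two_pow_le_bbD m)
      _ = (bbD m * (2*n)^m) * (n.descFactorial m * n.descFactorial m) := by ring
  have hEm : m^m * (2*n).descFactorial (2*m)
      ≤ (bbD m * (2*n)^m) * (m.descFactorial m * (2*n-m).descFactorial m) := by
    have hd : (2*n).descFactorial (2*m) = (2*n - m).descFactorial m * (2*n).descFactorial m := by
      have h := Nat.descFactorial_mul_descFactorial (show m ≤ 2*m by omega) (n := 2*n)
      rw [show 2*m - m = m by omega] at h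
      exact h.symm
    rw [hd, Nat.descFactorial_self]
    calc m^m * ((2*n-m).descFactorial m * (2*n).descFactorial m)
        ≤ (m ! * bbD m) * ((2*n-m).descFactorial m * (2*n)^m) :=
          Nat.mul_le_mul (pow_self_le_bbD m)
            (Nat.mul_le_mul_left _ (Nat.descFactorial_le_pow _ _))
      _ = (bbD m * (2*n)^m) * (m ! * (2*n-m).descFactorial m) := by ring
  have endn : ((2*n).descFactorial (2*m) : ℝ) ≤ ((bbD m * (2*n)^m : ℕ) : ℝ) * v n := by
    have hn0 : (0:ℝ) < ((n:ℝ))^m := by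
      have : (0:ℝ) < (n:ℝ) := by exact_mod_cast hn
      positivity
    simp only [hv]
    rw [show 2*n - n = n by omega, ← _root_.mul_div_assoc, le_div_iff₀ hn0]
    have hcast : ((n ^ m * (2 * n).descFactorial (2 * m) : ℕ) : ℝ)
        ≤ ((bbD m * (2 * n) ^ m * (n.descFactorial m * n.descFactorial m) : ℕ) : ℝ) :=
      Nat.cast_le.mpr hEn
    push_cast at hcast ⊢
    nlinarith [hcast]
  have endm : ((2*n).descFactorial (2*m) : ℝ) ≤ ((bbD m * (2*n)^m : ℕ) : ℝ) * v m := by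
    have hm0 : (0:ℝ) < ((m:ℝ))^m := by
      have : (0:ℝ) < (m:ℝ) := by exact_mod_cast hm
      positivity
    simp only [hv]
    rw [← _root_.mul_div_assoc, le_div_iff₀ hm0]
    have hcast : ((m ^ m * (2 * n).descFactorial (2 * m) : ℕ) : ℝ)
        ≤ ((bbD m * (2 * n) ^ m * (m.descFactorial m * (2 * n - m).descFactorial m) : ℕ) : ℝ) :=
      Nat.cast_le.mpr hEm
    push_cast at hcast ⊢
    nlinarith [hcast]
  intro l hl1 hl2
  have hvl : ((2*n).descFactorial (2*m) : ℝ) ≤ ((bbD m * (2*n)^m : ℕ) : ℝ) * v l := by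
    have hCpos : (0:ℝ) ≤ ((bbD m * (2*n)^m : ℕ) : ℝ) := by positivity
    rcases unimodal_min hpos hlc l hl1 hl2 with h | h
    · exact endm.trans (mul_le_mul_of_nonneg_left h hCpos)
    · exact endn.trans (mul_le_mul_of_nonneg_left h hCpos)
  have hl0 : (0:ℝ) < ((l:ℝ))^m := by
    have : (0:ℝ) < (l:ℝ) := by exact_mod_cast show 0 < l by omega
    positivity
  simp only [hv] at hvl
  rw [← _root_.mul_div_assoc, le_div_iff₀ hl0] at hvl
  have final : ((l^m * (2*n).descFactorial (2*m) : ℕ) : ℝ)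
      ≤ ((bbD m * (2*n)^m * (l.descFactorial m * (2*n-l).descFactorial m) : ℕ) : ℝ) := by
    push_cast at hvl ⊢
    nlinarith [hvl]
  exact_mod_cast final

/-- For `n ≥ 1` and integers `0 ≤ m ≤ ℓ ≤ n`,
`C(m,⌊m/2⌋)² · C(2n−2m, ℓ−m) · 2^{[m odd]} ≥ C(2n,ℓ) · (ℓ/(2n))^m`. -/
theorem stmt16 (n m ℓ : ℕ) (hn : 1 ≤ n) (hm : m ≤ ℓ) (hℓ : ℓ ≤ n) :
    ((2 * n).choose ℓ : ℝ) * ((ℓ : ℝ) / (2 * (n : ℝ))) ^ m ≤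
      (m.choose (m / 2) : ℝ) ^ 2 * (((2 * n - 2 * m).choose (ℓ - m) : ℕ) : ℝ) *
        2 ^ (if Odd m then 1 else 0) := by
  have hn0 : (0:ℝ) < (n:ℝ) := by exact_mod_cast hn
  have h2n0 : (0:ℝ) < (2 * (n:ℝ))^m := by positivity
  rw [div_pow, ← _root_.mul_div_assoc, div_le_iff₀ h2n0]
  by_cases hm0 : m = 0
  · subst hm0
    simp [Nat.odd_iff]
  · have hm1 : 1 ≤ m := by omega
    have hG : (2*n).choose ℓ * ℓ^m
        ≤ bbD m * ((2*n-2*m).choose (ℓ-m)) * (2*n)^m := by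
      have hid := key_identity (N := 2*n) (l := ℓ) (m := m) hm (by omega)
      have hstar := star n m hn hm1 (le_trans hm hℓ) ℓ hm hℓ
      have hpos2 : 0 < ℓ.descFactorial m * (2*n-ℓ).descFactorial m :=
        Nat.mul_pos (df_pos hm) (df_pos (by omega))
      apply Nat.le_of_mul_le_mul_right _ hpos2
      calc (2*n).choose ℓ * ℓ^m * (ℓ.descFactorial m * (2*n-ℓ).descFactorial m)
          = ((2*n).choose ℓ * (ℓ.descFactorial m * (2*n-ℓ).descFactorial m)) * ℓ^m := by ring
        _ = ((2*n-2*m).choose (ℓ-m) * (2*n).descFactorial (2*m)) * ℓ^m := by rw [hid]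
        _ = (2*n-2*m).choose (ℓ-m) * (ℓ^m * (2*n).descFactorial (2*m)) := by ring
        _ ≤ (2*n-2*m).choose (ℓ-m)
            * (bbD m * (2*n)^m * (ℓ.descFactorial m * (2*n-ℓ).descFactorial m)) :=
          Nat.mul_le_mul_left _ hstar
        _ = (bbD m * ((2*n-2*m).choose (ℓ-m)) * (2*n)^m)
            * (ℓ.descFactorial m * (2*n-ℓ).descFactorial m) := by ring
    have hcast : (((2*n).choose ℓ * ℓ^m : ℕ) : ℝ)
        ≤ ((bbD m * ((2*n-2*m).choose (ℓ-m)) * (2*n)^m : ℕ) : ℝ) := Nat.cast_le.mpr hG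
    rw [bbD] at hcast
    push_cast at hcast ⊢
    nlinarith [hcast]
end

section
/- Let n ≥ 1 and let ℓ be an integer with 1 ≤ ℓ ≤ n. Let f be a multilinear polynomial in 2n variables with nonnegative real coefficients. Let U be the distribution on {0,1}^{2n} in which the coordinates are independent Bernoulli(ℓ/n) random variables, and let U' be the uniform distribution on indicator vectors of ℓ-element subsets of {1,…,2n}. Then for every λ ∈ ℝ: Pr_{y ∼ U'}[f(y) ≤ λ] ≥ Pr_{y ∼ U}[f(y) ≤ λ] − e^{−ℓ/4}. -/
open Finset

noncomputable def ind17 {ι : Type*} [DecidableEq ι] (A : Finset ι) : ι → ℝ :=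
  fun v => if v ∈ A then 1 else 0

lemma ind17_nonneg {ι : Type*} [DecidableEq ι] (A : Finset ι) (v : ι) : 0 ≤ ind17 A v := by
  unfold ind17; split <;> norm_num

lemma ind17_le {ι : Type*} [DecidableEq ι] {A B : Finset ι} (h : B ⊆ A) (v : ι) :
    ind17 B v ≤ ind17 A v := by
  unfold ind17
  by_cases hv : v ∈ B
  · simp [hv, h hv]
  · simp [hv]; split <;> norm_num

lemma eval_ind17_mono {ι : Type*} [DecidableEq ι] (f : MvPolynomial ι ℝ)
    (hnonneg : ∀ m, 0 ≤ f.coeff m) {A B : Finset ι} (h : B ⊆ A) :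
    MvPolynomial.eval (ind17 B) f ≤ MvPolynomial.eval (ind17 A) f := by
  rw [MvPolynomial.eval_eq, MvPolynomial.eval_eq]
  apply Finset.sum_le_sum
  intro m _
  apply mul_le_mul_of_nonneg_left _ (hnonneg m)
  apply Finset.prod_le_prod
  · intro v _; exact pow_nonneg (ind17_nonneg B v) _
  · intro v _
    exact pow_le_pow_left₀ (ind17_nonneg B v) (ind17_le h v) _

lemma card_supersets {ι : Type*} [Fintype ι] [DecidableEq ι] {B : Finset ι} {k ℓ : ℕ}
    (hB : B.card = ℓ) (hk : ℓ ≤ k) :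
    ((Finset.powersetCard k (univ : Finset ι)).filter (fun A => B ⊆ A)).card
      = (Fintype.card ι - ℓ).choose (k - ℓ) := by
  have : ((Finset.powersetCard k (univ : Finset ι)).filter (fun A => B ⊆ A)).card
      = (Finset.powersetCard (k - ℓ) Bᶜ).card := by
    apply Finset.card_bij' (fun A _ => A \ B) (fun C _ => C ∪ B)
    · intro A hA
      simp only [Finset.mem_filter, Finset.mem_powersetCard_univ] at hA
      rw [Finset.mem_powersetCard]
      constructor
      · intro x hx
        simp only [Finset.mem_sdiff] at hx
        simp [Finset.mem_compl, hx.2]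
      · rw [Finset.card_sdiff_of_subset hA.2, hA.1, hB]
    · intro C hC
      rw [Finset.mem_powersetCard] at hC
      simp only [Finset.mem_filter, Finset.mem_powersetCard_univ]
      have hdisj : Disjoint C B := by
        rw [Finset.disjoint_right]
        intro x hxB hxC
        have := hC.1 hxC
        simp [Finset.mem_compl] at this
        exact this hxB
      constructor
      · rw [Finset.card_union_of_disjoint hdisj, hC.2, hB]
        omega
      · exact Finset.subset_union_right
    · intro A hA
      simp only [Finset.mem_filter] at hA
      exact Finset.sdiff_union_of_subset hA.2
    · intro C hC
      rw [Finset.mem_powersetCard] at hC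
      have hdisj : Disjoint C B := by
        rw [Finset.disjoint_right]
        intro x hxB hxC
        have := hC.1 hxC
        simp [Finset.mem_compl] at this
        exact this hxB
      rw [Finset.union_sdiff_right]
      exact Finset.sdiff_eq_self_of_disjoint hdisj
  rw [this, Finset.card_powersetCard, Finset.card_compl, hB]

lemma lym17 {ι : Type*} [Fintype ι] [DecidableEq ι] (D : Finset ι → Prop) [DecidablePred D]
    (hdown : ∀ A B : Finset ι, B ⊆ A → D A → D B) {k ℓ : ℕ} (hk : ℓ ≤ k) :
    ((Finset.powersetCard k (univ : Finset ι)).filter D).card * k.choose ℓ ≤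
      ((Finset.powersetCard ℓ (univ : Finset ι)).filter D).card
        * (Fintype.card ι - ℓ).choose (k - ℓ) := by
  set Dk := (Finset.powersetCard k (univ : Finset ι)).filter D with hDk
  set Dl := (Finset.powersetCard ℓ (univ : Finset ι)).filter D with hDl
  have key : Dk.card * k.choose ℓ = ∑ A ∈ Dk, ∑ B ∈ Finset.powersetCard ℓ A, 1 := by
    rw [Finset.sum_congr rfl (g := fun A => k.choose ℓ)]
    · rw [Finset.sum_const, smul_eq_mul]
    · intro A hA
      rw [Finset.sum_const, smul_eq_mul, mul_one, Finset.card_powersetCard]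
      simp only [hDk, Finset.mem_filter, Finset.mem_powersetCard_univ] at hA
      rw [hA.1]
  rw [key]
  rw [Finset.sum_comm' (t' := Finset.powersetCard ℓ (univ : Finset ι))
      (s' := fun B => Dk.filter (fun A => B ⊆ A))]
  · apply le_trans (Finset.sum_le_sum (g := fun B => if D B then
        (Fintype.card ι - ℓ).choose (k - ℓ) else 0) ?_)
    · rw [Finset.sum_ite, Finset.sum_const, Finset.sum_const]
      simp only [smul_eq_mul, mul_zero, add_zero, Finset.filter_filter]
      apply le_of_eq
      congr 1
    · intro B hB
      rw [Finset.mem_powersetCard_univ] at hB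
      by_cases hDB : D B
      · simp only [hDB, if_true, Finset.sum_const, smul_eq_mul, mul_one]
        calc (Dk.filter (fun A => B ⊆ A)).card
            ≤ ((Finset.powersetCard k (univ : Finset ι)).filter (fun A => B ⊆ A)).card := by
              apply Finset.card_le_card
              intro A hA
              simp only [Finset.mem_filter] at hA ⊢
              simp only [hDk, Finset.mem_filter] at hA
              exact ⟨hA.1.1, hA.2⟩
          _ = (Fintype.card ι - ℓ).choose (k - ℓ) := card_supersets hB hk
      · simp only [hDB, if_false]
        rw [Finset.sum_eq_zero]
        intro A hA
        simp only [Finset.mem_filter, hDk] at hA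
        exact absurd (hdown A B hA.2 hA.1.2) hDB
  · intro A B
    simp only [hDk, Finset.mem_filter, Finset.mem_powersetCard, Finset.mem_powersetCard_univ]
    constructor
    · rintro ⟨⟨hAk, hDA⟩, hBA, hBl⟩
      exact ⟨⟨⟨hAk, hDA⟩, hBA⟩, Finset.subset_univ B, hBl⟩
    · rintro ⟨⟨⟨hAk, hDA⟩, hBA⟩, _, hBl⟩
      exact ⟨⟨hAk, hDA⟩, hBA, hBl⟩

lemma lym17' {ι : Type*} [Fintype ι] [DecidableEq ι] (D : Finset ι → Prop) [DecidablePred D]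
    (hdown : ∀ A B : Finset ι, B ⊆ A → D A → D B) {k ℓ : ℕ} (hk : ℓ ≤ k)
    (hkN : k ≤ Fintype.card ι) :
    ((Finset.powersetCard k (univ : Finset ι)).filter D).card * (Fintype.card ι).choose ℓ ≤
      ((Finset.powersetCard ℓ (univ : Finset ι)).filter D).card * (Fintype.card ι).choose k := by
  have h1 := lym17 D hdown hk (ι := ι)
  have h2 := Nat.choose_mul (n := Fintype.card ι) hk
  have hpos : 0 < k.choose ℓ := Nat.choose_pos hk
  apply Nat.le_of_mul_le_mul_right _ hpos
  calc ((Finset.powersetCard k (univ : Finset ι)).filter D).card * (Fintype.card ι).choose ℓ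
        * k.choose ℓ
      = ((Finset.powersetCard k (univ : Finset ι)).filter D).card * k.choose ℓ
        * (Fintype.card ι).choose ℓ := by ring
    _ ≤ ((Finset.powersetCard ℓ (univ : Finset ι)).filter D).card
        * (Fintype.card ι - ℓ).choose (k - ℓ) * (Fintype.card ι).choose ℓ :=
        Nat.mul_le_mul_right _ h1
    _ = ((Finset.powersetCard ℓ (univ : Finset ι)).filter D).card
        * ((Fintype.card ι).choose ℓ * (Fintype.card ι - ℓ).choose (k - ℓ)) := by ring
    _ = ((Finset.powersetCard ℓ (univ : Finset ι)).filter D).card * (Fintype.card ι).choose k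
        * k.choose ℓ := by rw [← h2]; ring

lemma sum_weights17 {ι : Type*} [Fintype ι] [DecidableEq ι] (a b : ℝ) :
    ∑ A : Finset ι, a ^ A.card * b ^ (Fintype.card ι - A.card) = (a + b) ^ Fintype.card ι := by
  calc ∑ A : Finset ι, a ^ A.card * b ^ (Fintype.card ι - A.card)
      = ∑ A ∈ (univ : Finset ι).powerset, (∏ _i ∈ A, a) * ∏ _i ∈ univ \ A, b := by
        rw [Finset.powerset_univ]
        apply Finset.sum_congr rfl
        intro A _
        rw [Finset.prod_const, Finset.prod_const, ← Finset.compl_eq_univ_sdiff,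
          Finset.card_compl]
    _ = ∏ _i ∈ (univ : Finset ι), (a + b) := (Finset.prod_add _ _ _).symm
    _ = (a + b) ^ Fintype.card ι := by rw [Finset.prod_const, Finset.card_univ]
/-- Coupling between the `(ℓ/n)`-biased product distribution on
`{0,1}^{2n}` and the uniform distribution on indicators of `ℓ`-subsets of `[2n]`:
for every multilinear polynomial `f` in `2n` variables with nonnegative
coefficients and every `λ ∈ ℝ`,
`Pr_{y ∼ U'}[f(y) ≤ λ] ≥ Pr_{y ∼ U}[f(y) ≤ λ] − e^{−ℓ/4}`. -/
theorem stmt17 (n ℓ : ℕ) (hn : 1 ≤ n) (hℓ1 : 1 ≤ ℓ) (hℓn : ℓ ≤ n)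
    (f : MvPolynomial (Fin (2 * n)) ℝ)
    (hmultilinear : ∀ m ∈ f.support, ∀ v, m v ≤ 1)
    (hnonneg : ∀ m, 0 ≤ f.coeff m) (lam : ℝ) :
    (∑ y : Fin (2 * n) → Bool,
        (∏ v, if y v then (ℓ : ℝ) / n else 1 - (ℓ : ℝ) / n) *
          (if MvPolynomial.eval (fun v => if y v then (1 : ℝ) else 0) f ≤ lam
            then 1 else 0))
      - Real.exp (-(ℓ : ℝ) / 4) ≤
    ((Finset.univ.filter (fun A : Finset (Fin (2 * n)) =>
        A.card = ℓ ∧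
          MvPolynomial.eval (fun v => if v ∈ A then (1 : ℝ) else 0) f ≤ lam)).card : ℝ)
      / ((2 * n).choose ℓ : ℝ) := by
  classical
  have hn' : (0:ℝ) < (n:ℝ) := by exact_mod_cast hn
  set q : ℝ := (ℓ : ℝ) / n with hq
  have hq0 : 0 ≤ q := by positivity
  have hq1 : q ≤ 1 := by
    rw [hq]; rw [div_le_one hn']; exact_mod_cast hℓn
  set D : Finset (Fin (2 * n)) → Prop :=
    fun A => MvPolynomial.eval (fun v => if v ∈ A then (1:ℝ) else 0) f ≤ lam with hD
  have hdown : ∀ A B : Finset (Fin (2*n)), B ⊆ A → D A → D B := by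
    intro A B hBA hA
    exact le_trans (eval_ind17_mono f hnonneg hBA) hA
  -- Step 1: rewrite the Boolean sum as a sum over finsets
  have step1 : (∑ y : Fin (2 * n) → Bool,
        (∏ v, if y v then q else 1 - q) *
          (if MvPolynomial.eval (fun v => if y v then (1 : ℝ) else 0) f ≤ lam
            then 1 else 0))
      = ∑ A : Finset (Fin (2*n)),
          q ^ A.card * (1-q) ^ (2*n - A.card) * (if D A then 1 else 0) := by
    refine Finset.sum_nbij' (i := fun y : Fin (2*n) → Bool => univ.filter (fun v => y v))
      (j := fun A : Finset (Fin (2*n)) => fun v => decide (v ∈ A))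
      (fun y _ => mem_univ _) (fun A _ => mem_univ _) ?_ ?_ ?_
    · intro y _
      funext v
      simp
    · intro A _
      ext v
      simp
    · intro y _
      have hcard : (univ.filter (fun v => y v)).card
          + (univ.filter (fun v => ¬ y v)).card = 2*n := by
        rw [Finset.card_filter_add_card_filter_not]
        simp
      have hpt : (fun v => if y v then (1:ℝ) else 0)
          = (fun v => if v ∈ univ.filter (fun v => y v) then (1:ℝ) else 0) := by
        funext v; simp
      congr 1
      · rw [Finset.prod_ite (fun _ => q) (fun _ => 1-q), Finset.prod_const, Finset.prod_const]
        have h2 : (univ.filter (fun v => ¬ y v)).card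
            = 2*n - (univ.filter (fun v => y v)).card := by omega
        rw [h2]
      · show (if MvPolynomial.eval (fun v => if y v then (1:ℝ) else 0) f ≤ lam
            then (1:ℝ) else 0)
          = (if MvPolynomial.eval
              (fun v => if v ∈ univ.filter (fun v => y v) then (1:ℝ) else 0) f ≤ lam
            then (1:ℝ) else 0)
        rw [hpt]
  rw [step1]
  rw [← Finset.sum_filter_add_sum_filter_not univ (fun A : Finset (Fin (2*n)) => A.card < ℓ)]
  have hDl : ((Finset.powersetCard ℓ (univ : Finset (Fin (2*n)))).filter D)
      = univ.filter (fun A : Finset (Fin (2*n)) => A.card = ℓ ∧ D A) := by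
    rw [Finset.powersetCard_eq_filter, Finset.powerset_univ, Finset.filter_filter]
  have hCpos : (0:ℝ) < ((2*n).choose ℓ : ℝ) := by
    exact_mod_cast Nat.choose_pos (by omega : ℓ ≤ 2*n)
  -- Tail bound
  have tail : ∑ A ∈ univ.filter (fun A : Finset (Fin (2*n)) => A.card < ℓ),
      q ^ A.card * (1-q) ^ (2*n - A.card) * (if D A then 1 else 0)
      ≤ Real.exp (-(ℓ:ℝ)/4) := by
    have h1q2 : (0:ℝ) ≤ 1 - q/2 := by linarith
    have h1q : (0:ℝ) ≤ 1 - q := by linarith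
    calc ∑ A ∈ univ.filter (fun A : Finset (Fin (2*n)) => A.card < ℓ),
          q ^ A.card * (1-q) ^ (2*n - A.card) * (if D A then 1 else 0)
        ≤ ∑ A ∈ univ.filter (fun A : Finset (Fin (2*n)) => A.card < ℓ),
          (2:ℝ)^ℓ * ((q/2) ^ A.card * (1-q) ^ (2*n - A.card)) := by
          apply Finset.sum_le_sum
          intro A hA
          simp only [Finset.mem_filter] at hA
          have hw : (0:ℝ) ≤ q ^ A.card * (1-q) ^ (2*n - A.card) :=
            mul_nonneg (pow_nonneg hq0 _) (pow_nonneg h1q _)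
          have hle : q ^ A.card * (1-q) ^ (2*n - A.card) * (if D A then 1 else 0)
              ≤ q ^ A.card * (1-q) ^ (2*n - A.card) := by
            split <;> nlinarith
          apply le_trans hle
          have hqc : q ^ A.card = 2 ^ A.card * (q/2) ^ A.card := by
            rw [← mul_pow]; ring_nf
          rw [hqc]
          have h2c : (2:ℝ) ^ A.card ≤ 2 ^ ℓ := by
            apply pow_le_pow_right₀ one_le_two
            omega
          have hw2 : (0:ℝ) ≤ (q/2) ^ A.card * (1-q) ^ (2*n - A.card) :=
            mul_nonneg (pow_nonneg (by positivity) _) (pow_nonneg h1q _)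
          nlinarith
      _ ≤ (2:ℝ)^ℓ * ∑ A : Finset (Fin (2*n)), (q/2) ^ A.card * (1-q) ^ (2*n - A.card) := by
          rw [← Finset.mul_sum]
          apply mul_le_mul_of_nonneg_left _ (by positivity)
          apply Finset.sum_le_sum_of_subset_of_nonneg (Finset.filter_subset _ _)
          intro A _ _
          exact mul_nonneg (pow_nonneg (by positivity) _) (pow_nonneg h1q _)
      _ = (2:ℝ)^ℓ * (1 - q/2) ^ (2*n) := by
          have hsw := sum_weights17 (ι := Fin (2*n)) (q/2) (1-q)
          rw [Fintype.card_fin] at hsw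
          rw [hsw]
          ring_nf
      _ ≤ (2:ℝ)^ℓ * (Real.exp (-(q/2))) ^ (2*n) := by
          apply mul_le_mul_of_nonneg_left _ (by positivity)
          apply pow_le_pow_left₀ h1q2
          have := Real.add_one_le_exp (-(q/2))
          linarith
      _ = (2:ℝ)^ℓ * Real.exp (-(ℓ:ℝ)) := by
          congr 1
          rw [← Real.exp_nat_mul]
          congr 1
          rw [hq]
          push_cast
          field_simp
      _ ≤ Real.exp (-(ℓ:ℝ)/4) := by
          have h2 : (2:ℝ) ≤ Real.exp (3/4) := by
            have he : (2.7182818283 : ℝ) < Real.exp 1 := Real.exp_one_gt_d9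
            have h3 : (16:ℝ) ≤ Real.exp 3 := by
              have hx : Real.exp 3 = (Real.exp 1)^3 := by
                rw [← Real.exp_nat_mul]; norm_num
              have hy : (2.7182818283:ℝ)^3 ≤ (Real.exp 1)^3 :=
                pow_le_pow_left₀ (by norm_num) he.le 3
              rw [hx]
              nlinarith
            have h4 : ((2:ℝ))^4 ≤ (Real.exp (3/4))^4 := by
              have hx : (Real.exp (3/4))^4 = Real.exp 3 := by
                rw [← Real.exp_nat_mul]; norm_num
              rw [hx]; norm_num; linarith
            exact le_of_pow_le_pow_left₀ (by norm_num) (le_of_lt (Real.exp_pos _)) h4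
          calc (2:ℝ)^ℓ * Real.exp (-(ℓ:ℝ))
              ≤ (Real.exp (3/4))^ℓ * Real.exp (-(ℓ:ℝ)) := by
                apply mul_le_mul_of_nonneg_right _ (le_of_lt (Real.exp_pos _))
                exact pow_le_pow_left₀ (by norm_num) h2 ℓ
            _ = Real.exp ((3/4) * ℓ + (-(ℓ:ℝ))) := by
                rw [Real.exp_add, ← Real.exp_nat_mul]
                congr 2
                ring
            _ = Real.exp (-(ℓ:ℝ)/4) := by congr 1; ring
  -- Head bound
  have head : ∑ A ∈ univ.filter (fun A : Finset (Fin (2*n)) => ¬ A.card < ℓ),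
      q ^ A.card * (1-q) ^ (2*n - A.card) * (if D A then 1 else 0)
      ≤ (((univ.filter (fun A : Finset (Fin (2*n)) => A.card = ℓ ∧ D A)).card : ℝ))
        / ((2*n).choose ℓ : ℝ) := by
    have h1q : (0:ℝ) ≤ 1 - q := by linarith
    rw [← Finset.sum_fiberwise_of_maps_to (g := fun A : Finset (Fin (2*n)) => A.card)
      (t := Finset.Icc ℓ (2*n)) ?_]
    · calc ∑ k ∈ Finset.Icc ℓ (2*n),
            ∑ A ∈ (univ.filter (fun A : Finset (Fin (2*n)) => ¬ A.card < ℓ)).filter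
              (fun A => A.card = k),
            q ^ A.card * (1-q) ^ (2*n - A.card) * (if D A then 1 else 0)
          ≤ ∑ k ∈ Finset.Icc ℓ (2*n),
            (((univ.filter (fun A : Finset (Fin (2*n)) => A.card = ℓ ∧ D A)).card : ℝ)
              / ((2*n).choose ℓ : ℝ))
              * (q ^ k * (1-q) ^ (2*n - k) * ((2*n).choose k : ℝ)) := by
            apply Finset.sum_le_sum
            intro k hk
            rw [Finset.mem_Icc] at hk
            have hfilt : ((univ.filter (fun A : Finset (Fin (2*n)) => ¬ A.card < ℓ)).filter
                (fun A => A.card = k)).filter D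
                = (Finset.powersetCard k (univ : Finset (Fin (2*n)))).filter D := by
              rw [Finset.filter_filter, Finset.filter_filter, Finset.powersetCard_eq_filter,
                Finset.powerset_univ, Finset.filter_filter]
              apply Finset.filter_congr
              intro A _
              constructor
              · rintro ⟨h1, h2, h3⟩; exact ⟨h2, h3⟩
              · rintro ⟨h2, h3⟩; exact ⟨by omega, h2, h3⟩
            have hsum : ∑ A ∈ (univ.filter (fun A : Finset (Fin (2*n)) => ¬ A.card < ℓ)).filter
                (fun A => A.card = k),
                q ^ A.card * (1-q) ^ (2*n - A.card) * (if D A then 1 else 0)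
                = q ^ k * (1-q) ^ (2*n - k)
                  * (((Finset.powersetCard k (univ : Finset (Fin (2*n)))).filter D).card : ℝ) := by
              rw [Finset.sum_congr rfl (g := fun A =>
                  q ^ k * (1-q) ^ (2*n - k) * (if D A then 1 else 0))
                (by intro A hA
                    simp only [Finset.mem_filter] at hA
                    rw [hA.2])]
              rw [← Finset.mul_sum, Finset.sum_boole, hfilt]
            rw [hsum]
            have hkN : k ≤ Fintype.card (Fin (2*n)) := by rw [Fintype.card_fin]; exact hk.2
            have hlym := lym17' D hdown hk.1 hkN
            rw [Fintype.card_fin] at hlym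
            rw [hDl] at hlym
            have hlymR : (((Finset.powersetCard k (univ : Finset (Fin (2*n)))).filter D).card : ℝ)
                * ((2*n).choose ℓ : ℝ)
                ≤ ((univ.filter (fun A : Finset (Fin (2*n)) => A.card = ℓ ∧ D A)).card : ℝ)
                * ((2*n).choose k : ℝ) := by exact_mod_cast hlym
            have hw : (0:ℝ) ≤ q ^ k * (1-q) ^ (2*n - k) :=
              mul_nonneg (pow_nonneg hq0 _) (pow_nonneg h1q _)
            rw [div_mul_eq_mul_div, le_div_iff₀ hCpos]
            nlinarith [mul_le_mul_of_nonneg_left hlymR hw]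
      _ ≤ (((univ.filter (fun A : Finset (Fin (2*n)) => A.card = ℓ ∧ D A)).card : ℝ))
            / ((2*n).choose ℓ : ℝ) := by
            rw [← Finset.mul_sum]
            have hc0 : (0:ℝ) ≤ ((univ.filter
                (fun A : Finset (Fin (2*n)) => A.card = ℓ ∧ D A)).card : ℝ)
                / ((2*n).choose ℓ : ℝ) := by positivity
            have hsum1 : ∑ k ∈ Finset.Icc ℓ (2*n),
                q ^ k * (1-q) ^ (2*n - k) * ((2*n).choose k : ℝ) ≤ 1 := by
              calc ∑ k ∈ Finset.Icc ℓ (2*n),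
                    q ^ k * (1-q) ^ (2*n - k) * ((2*n).choose k : ℝ)
                  ≤ ∑ k ∈ Finset.range (2*n+1),
                    q ^ k * (1-q) ^ (2*n - k) * ((2*n).choose k : ℝ) := by
                    apply Finset.sum_le_sum_of_subset_of_nonneg
                    · intro k hk
                      simp only [Finset.mem_Icc] at hk
                      simp only [Finset.mem_range]
                      omega
                    · intro k _ _
                      exact mul_nonneg (mul_nonneg (pow_nonneg hq0 _) (pow_nonneg h1q _))
                        (Nat.cast_nonneg _)
                _ = (q + (1-q)) ^ (2*n) := (add_pow q (1-q) (2*n)).symm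
                _ = 1 := by norm_num
            nlinarith
    · intro A hA
      simp only [Finset.mem_filter, Finset.mem_univ, true_and] at hA
      have h2 := Finset.card_le_univ A
      rw [Fintype.card_fin] at h2
      show A.card ∈ Finset.Icc ℓ (2*n)
      rw [Finset.mem_Icc]
      omega
  have hfinal : (univ.filter (fun A : Finset (Fin (2*n)) => A.card = ℓ ∧ D A))
      = univ.filter (fun A : Finset (Fin (2*n)) => A.card = ℓ ∧
          MvPolynomial.eval (fun v => if v ∈ A then (1:ℝ) else 0) f ≤ lam) := by
    apply Finset.filter_congr
    intro A _
    simp [hD]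
  rw [hfinal] at head
  linarith
end
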